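/- arXiv:1604.06973 — 3 statements merged into one kernel-verified Lean document; each statement's English description precedes it below -/
import Mathlib

section
/- Let X be an infinite set, α an automorphism of Fact(X), and (θ,θ') a factor pair with α(θ,θ') = (γ,γ'). Then for all positive integers m and n: θ is an m-relation if and only if γ is an m-relation, and θ' is an n-relation if and only if γ' is an n-relation. -/
/-- A factor pair is a pair of equivalence relations with `θ ∩ θ' = Δ` and `θ ∘ θ' = ∇`. -/
def IsFactorPair {X : Type*} (θ θ' : Setoid X) : Prop :=
  (∀ x y : X, θ x y ∧ θ' x y ↔ x = y) ∧
  ∀ x y : X, Relation.Comp (⇑θ) (⇑θ') x y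

/-- `Fact X`, the set of factor pairs of `X`. -/
def FactPair (X : Type*) : Type _ :=
  {p : Setoid X × Setoid X // IsFactorPair p.1 p.2}

/-- The order on `Fact X`: `(θ,θ') ≤ (φ,φ')` iff `φ ⊆ θ`, `θ' ⊆ φ'` and `φ∘θ' = θ'∘φ`. -/
def FactLE {X : Type*} (p q : FactPair X) : Prop :=
  q.1.1 ≤ p.1.1 ∧ p.1.2 ≤ q.1.2 ∧
    Relation.Comp (⇑q.1.1) (⇑p.1.2) = Relation.Comp (⇑p.1.2) (⇑q.1.1)

def FactLT {X : Type*} (p q : FactPair X) : Prop :=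
  FactLE p q ∧ p ≠ q

/-- The orthocomplementation `(θ,θ')^⊥ = (θ',θ)` on `Fact X`. -/
def FactPerp {X : Type*} (p : FactPair X) : FactPair X :=
  ⟨(p.1.2, p.1.1), by
    obtain ⟨h1, h2⟩ := p.2
    refine ⟨fun x y => ⟨fun h => (h1 x y).1 ⟨h.2, h.1⟩, ?_⟩, fun x y => ?_⟩
    · rintro rfl
      exact ⟨p.1.2.refl' x, p.1.1.refl' x⟩
    · obtain ⟨z, hz1, hz2⟩ := h2 y x
      exact ⟨z, p.1.2.symm' hz2, p.1.1.symm' hz1⟩⟩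

/-- `0 = (∇,Δ)` in `Fact X`. -/
def FactZero (X : Type*) : FactPair X :=
  ⟨(⊤, ⊥), by
    refine ⟨fun x y => ⟨fun h => ?_, ?_⟩, fun x y => ⟨y, ?_, ?_⟩⟩
    · simpa [Setoid.bot_def] using h.2
    · rintro rfl
      exact ⟨(⊤ : Setoid X).refl' x, (⊥ : Setoid X).refl' x⟩
    · simp [Setoid.top_def]
    · simp [Setoid.bot_def]⟩

/-- `1 = (Δ,∇)` in `Fact X`. -/
def FactOne (X : Type*) : FactPair X :=
  ⟨(⊥, ⊤), by
    refine ⟨fun x y => ⟨fun h => ?_, ?_⟩, fun x y => ⟨x, ?_, ?_⟩⟩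
    · simpa [Setoid.bot_def] using h.1
    · rintro rfl
      exact ⟨(⊥ : Setoid X).refl' x, (⊤ : Setoid X).refl' x⟩
    · simp [Setoid.bot_def]
    · simp [Setoid.top_def]⟩

/-- An atom of `Fact X`. -/
def IsFactAtom {X : Type*} (a : FactPair X) : Prop :=
  FactLT (FactZero X) a ∧ ∀ x : FactPair X, FactLT (FactZero X) x → ¬ FactLT x a

/-- An `n`-relation: every equivalence class has exactly `n` elements. -/
def IsNRel {X : Type*} (n : ℕ) (θ : Setoid X) : Prop :=
  ∀ x : X, Nat.card {y // θ x y} = n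

/-- A `p`-atom: an atom `(φ,φ')` such that `φ'` is a `p`-relation. -/
def IsPAtom {X : Type*} (p : ℕ) (a : FactPair X) : Prop :=
  IsFactAtom a ∧ IsNRel p a.1.2

/-- The image `σ(θ) = {(σ x, σ y) : (x,y) ∈ θ}` of an equivalence relation under a
permutation. -/
def permSetoid {X : Type*} (σ : Equiv.Perm X) (θ : Setoid X) : Setoid X :=
  ⟨fun a b => θ (σ.symm a) (σ.symm b),
    ⟨fun a => θ.refl' _, fun h => θ.symm' h, fun h1 h2 => θ.trans' h1 h2⟩⟩

/-- The action `Γ(σ)(θ,θ') = (σ(θ),σ(θ'))` of a permutation on factor pairs. -/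
def permFactPair {X : Type*} (σ : Equiv.Perm X) (t : FactPair X) : FactPair X :=
  ⟨(permSetoid σ t.1.1, permSetoid σ t.1.2), by
    obtain ⟨h1, h2⟩ := t.2
    refine ⟨fun x y => ⟨fun h => ?_, ?_⟩, fun x y => ?_⟩
    · exact σ.symm.injective ((h1 (σ.symm x) (σ.symm y)).1 ⟨h.1, h.2⟩)
    · rintro rfl
      exact ⟨t.1.1.refl' _, t.1.2.refl' _⟩
    · obtain ⟨w, hw1, hw2⟩ := h2 (σ.symm x) (σ.symm y)
      refine ⟨σ w, ?_, ?_⟩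
      · show t.1.1 (σ.symm x) (σ.symm (σ w))
        simpa using hw1
      · show t.1.2 (σ.symm (σ w)) (σ.symm y)
        simpa using hw2⟩

/-- An automorphism of `Fact X`: a bijection preserving `≤` in both directions and
commuting with `⊥`. -/
def IsFactAut {X : Type*} (α : FactPair X → FactPair X) : Prop :=
  Function.Bijective α ∧
  (∀ p q : FactPair X, FactLE p q ↔ FactLE (α p) (α q)) ∧
  ∀ p : FactPair X, α (FactPerp p) = FactPerp (α p)

/-- `Eq*(X)`: the equivalence relations on `X` that are `n`-relations for some `n ≥ 1`. -/
def EqStar (X : Type*) : Type _ :=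
  {θ : Setoid X // ∃ n : ℕ, 0 < n ∧ IsNRel n θ}

/-- A regular equivalence relation: any two classes are equinumerous. -/
def IsRegularRel {X : Type*} (θ : Setoid X) : Prop :=
  ∀ x y : X, Nonempty ({z // θ x z} ≃ {z // θ y z})

/-- The action of a permutation on `Eq*(X)`. -/
def permEqStar {X : Type*} (σ : Equiv.Perm X) (θ : EqStar X) : EqStar X :=
  ⟨permSetoid σ θ.1, by
    obtain ⟨n, hn, hrel⟩ := θ.2
    refine ⟨n, hn, fun x => ?_⟩
    have e : {y // (permSetoid σ θ.1) x y} ≃ {y // θ.1 (σ.symm x) y} :=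
      σ.symm.subtypeEquiv fun y => Iff.rfl
    rw [Nat.card_congr e]
    exact hrel (σ.symm x)⟩

namespace FactProof

variable {B C B' : Type*}

lemma eq_of_both (t : FactPair B) {x y : B} (h1 : t.1.1 x y) (h2 : t.1.2 x y) : x = y :=
  (t.2.1 x y).1 ⟨h1, h2⟩

lemma comp12 (t : FactPair B) (x y : B) : ∃ z, t.1.1 x z ∧ t.1.2 z y := t.2.2 x y

lemma comp21 (t : FactPair B) (x y : B) : ∃ z, t.1.2 x z ∧ t.1.1 z y := by
  obtain ⟨z, h1, h2⟩ := comp12 t y x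
  exact ⟨z, t.1.2.symm' h2, t.1.1.symm' h1⟩

lemma grid (t : FactPair B) (x y : B) : ∃! z, t.1.1 x z ∧ t.1.2 z y := by
  obtain ⟨z, h1, h2⟩ := comp12 t x y
  refine ⟨z, ⟨h1, h2⟩, fun w ⟨hw1, hw2⟩ => ?_⟩
  exact eq_of_both t (t.1.1.trans' (t.1.1.symm' hw1) h1)
    (t.1.2.trans' hw2 (t.1.2.symm' h2))

lemma factpair_ext {t s : FactPair B} (h1 : t.1.1 = s.1.1) (h2 : t.1.2 = s.1.2) : t = s := by
  apply Subtype.ext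
  exact Prod.ext h1 h2

lemma setoid_ext' {r s : Setoid B} (h : ∀ x y, r x y ↔ s x y) : r = s :=
  Setoid.ext h

/-- `FactPerp` components. -/
lemma perp_fst (t : FactPair B) : (FactPerp t).1.1 = t.1.2 := rfl
lemma perp_snd (t : FactPair B) : (FactPerp t).1.2 = t.1.1 := rfl

lemma perp_perp (t : FactPair B) : FactPerp (FactPerp t) = t := factpair_ext rfl rfl

lemma factLE_refl (t : FactPair B) : FactLE t t := by
  refine ⟨le_refl _, le_refl _, ?_⟩
  funext x y
  apply propext
  constructor
  · rintro ⟨z, _, _⟩; exact comp21 t x y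
  · rintro ⟨z, _, _⟩; exact comp12 t x y

lemma factLE_antisymm {t s : FactPair B} (h1 : FactLE t s) (h2 : FactLE s t) : t = s :=
  factpair_ext (le_antisymm h2.1 h1.1) (le_antisymm h1.2.1 h2.2.1)

lemma comp_symm_flip {r s : Setoid B}
    (h : ∀ x y, Relation.Comp (⇑r) (⇑s) x y → Relation.Comp (⇑s) (⇑r) x y) :
    Relation.Comp (⇑r) (⇑s) = Relation.Comp (⇑s) (⇑r) := by
  funext x y
  apply propext
  constructor
  · exact h x y
  · rintro ⟨z, hz1, hz2⟩
    obtain ⟨w, hw1, hw2⟩ := h y x ⟨z, r.symm' hz2, s.symm' hz1⟩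
    exact ⟨w, r.symm' hw2, s.symm' hw1⟩

lemma factLE_trans {p q r : FactPair B} (h1 : FactLE p q) (h2 : FactLE q r) : FactLE p r := by
  obtain ⟨hq1, hp2, hC1⟩ := h1
  obtain ⟨hr1, hq2, hC2⟩ := h2
  refine ⟨le_trans hr1 hq1, le_trans hp2 hq2, comp_symm_flip ?_⟩
  rintro x y ⟨z, hxz, hzy⟩
  -- hxz : r.1.1 x z, hzy : p.1.2 z y
  have hA : Relation.Comp (⇑q.1.1) (⇑p.1.2) x y := ⟨z, hr1 hxz, hzy⟩
  rw [hC1] at hA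
  obtain ⟨w, hw1, hw2⟩ := hA
  have hB : Relation.Comp (⇑r.1.1) (⇑q.1.2) x y := ⟨z, hxz, hp2 hzy⟩
  rw [hC2] at hB
  obtain ⟨v, hv1, hv2⟩ := hB
  -- hv1 : q.1.2 x v, hv2 : r.1.1 v y, hw1 : p.1.2 x w, hw2 : q.1.1 w y
  have hvw : v = w := by
    apply eq_of_both q
    · exact q.1.1.trans' (hr1 hv2) (q.1.1.symm' hw2)
    · exact q.1.2.trans' (q.1.2.symm' hv1) (hp2 hw1)
  exact ⟨w, hw1, hvw ▸ hv2⟩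

lemma bot_rel (x y : B) : (⊥ : Setoid B) x y ↔ x = y := by
  rw [Setoid.bot_def]
lemma top_rel (x y : B) : (⊤ : Setoid B) x y := by
  rw [Setoid.top_def]; trivial

lemma factZero_le (t : FactPair B) : FactLE (FactZero B) t := by
  refine ⟨le_top, bot_le, ?_⟩
  funext x y
  apply propext
  constructor
  · rintro ⟨z, h1, h2⟩
    rw [show (FactZero B).1.2 = ⊥ from rfl, bot_rel] at h2
    exact ⟨x, (bot_rel x x).2 rfl, h2 ▸ h1⟩
  · rintro ⟨z, h1, h2⟩
    rw [show (FactZero B).1.2 = ⊥ from rfl, bot_rel] at h1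
    exact ⟨y, h1 ▸ h2, (bot_rel y y).2 rfl⟩

lemma le_factOne (t : FactPair B) : FactLE t (FactOne B) := by
  refine ⟨bot_le, le_top, ?_⟩
  funext x y
  apply propext
  constructor
  · rintro ⟨z, h1, h2⟩
    rw [show (FactOne B).1.1 = ⊥ from rfl, bot_rel] at h1
    exact ⟨y, h1 ▸ h2, (bot_rel y y).2 rfl⟩
  · rintro ⟨z, h1, h2⟩
    rw [show (FactOne B).1.1 = ⊥ from rfl, bot_rel] at h2
    exact ⟨x, (bot_rel x x).2 rfl, h2 ▸ h1⟩

lemma perp_le_perp {t s : FactPair B} (h : FactLE t s) : FactLE (FactPerp s) (FactPerp t) := by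
  obtain ⟨h1, h2, h3⟩ := h
  exact ⟨h2, h1, h3.symm⟩

lemma perp_le_iff {t s : FactPair B} : FactLE (FactPerp s) (FactPerp t) ↔ FactLE t s :=
  ⟨fun h => by simpa [perp_perp] using perp_le_perp h, perp_le_perp⟩

lemma perp_zero : FactPerp (FactZero B) = FactOne B := factpair_ext rfl rfl
lemma perp_one : FactPerp (FactOne B) = FactZero B := factpair_ext rfl rfl

end FactProof
namespace FactProof

variable {B : Type*}

/-- The class of `x` under `θ`. -/
abbrev cls (θ : Setoid B) (x : B) : Type _ := {y // θ x y}

noncomputable def gp (t : FactPair B) (x y : B) : B := (grid t x y).exists.choose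

lemma gp_spec1 (t : FactPair B) (x y : B) : t.1.1 x (gp t x y) :=
  (grid t x y).exists.choose_spec.1

lemma gp_spec2 (t : FactPair B) (x y : B) : t.1.2 (gp t x y) y :=
  (grid t x y).exists.choose_spec.2

lemma gp_unique (t : FactPair B) {x y z : B} (h1 : t.1.1 x z) (h2 : t.1.2 z y) :
    z = gp t x y :=
  (grid t x y).unique ⟨h1, h2⟩ ⟨gp_spec1 t x y, gp_spec2 t x y⟩

/-- All classes of the first component of a factor pair are equinumerous. -/
noncomputable def clsEquiv1 (t : FactPair B) (x y : B) : cls t.1.1 x ≃ cls t.1.1 y where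
  toFun z := ⟨gp t y z.1, gp_spec1 t y z.1⟩
  invFun w := ⟨gp t x w.1, gp_spec1 t x w.1⟩
  left_inv z := by
    apply Subtype.ext
    exact (gp_unique t z.2 (t.1.2.symm' (gp_spec2 t y z.1))).symm
  right_inv w := by
    apply Subtype.ext
    exact (gp_unique t w.2 (t.1.2.symm' (gp_spec2 t x w.1))).symm

lemma card_cls1_eq (t : FactPair B) (x y : B) :
    Nat.card (cls t.1.1 x) = Nat.card (cls t.1.1 y) :=
  Nat.card_congr (clsEquiv1 t x y)

lemma card_cls2_eq (t : FactPair B) (x y : B) :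
    Nat.card (cls t.1.2 x) = Nat.card (cls t.1.2 y) :=
  Nat.card_congr (clsEquiv1 (FactPerp t) x y)

lemma isNRel1_iff_point (t : FactPair B) (x : B) {n : ℕ} :
    IsNRel n t.1.1 ↔ Nat.card (cls t.1.1 x) = n :=
  ⟨fun h => h x, fun h y => (card_cls1_eq t y x).trans h⟩

lemma isNRel2_iff_point (t : FactPair B) (x : B) {n : ℕ} :
    IsNRel n t.1.2 ↔ Nat.card (cls t.1.2 x) = n :=
  ⟨fun h => h x, fun h y => (card_cls2_eq t y x).trans h⟩

lemma isNRel_unique {θ : Setoid B} {n m : ℕ} (x : B) (hn : IsNRel n θ) (hm : IsNRel m θ) :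
    n = m := (hn x).symm.trans (hm x)

/-- The grid bijection `B ≃ (class of x₀ under θ) × (class of x₀ under θ')`. -/
noncomputable def gridEquiv (t : FactPair B) (x₀ : B) :
    B ≃ cls t.1.1 x₀ × cls t.1.2 x₀ where
  toFun b :=
    (⟨gp (FactPerp t) b x₀, t.1.1.symm' (gp_spec2 (FactPerp t) b x₀)⟩,
     ⟨gp t b x₀, t.1.2.symm' (gp_spec2 t b x₀)⟩)
  invFun p := gp (FactPerp t) p.1.1 p.2.1
  left_inv b := by
    exact (gp_unique (FactPerp t)
      (t.1.2.symm' (gp_spec1 (FactPerp t) b x₀)) (gp_spec1 t b x₀)).symm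
  right_inv p := by
    obtain ⟨⟨w, hw⟩, ⟨z, hz⟩⟩ := p
    have h1 : t.1.2 w (gp (FactPerp t) w z) := gp_spec1 (FactPerp t) w z
    have h2 : t.1.1 (gp (FactPerp t) w z) z := gp_spec2 (FactPerp t) w z
    refine Prod.ext (Subtype.ext ?_) (Subtype.ext ?_)
    · exact (gp_unique (FactPerp t) (t.1.2.symm' h1) (t.1.1.symm' hw)).symm
    · exact (gp_unique t h2 (t.1.2.symm' hz)).symm

lemma card_eq_mul (t : FactPair B) (x₀ : B) :
    Nat.card B = Nat.card (cls t.1.1 x₀) * Nat.card (cls t.1.2 x₀) := by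
  rw [Nat.card_congr (gridEquiv t x₀), Nat.card_prod]

/-- The factor pair induced by a product decomposition. -/
def gridPair {A D : Type*} (e : B ≃ A × D) : FactPair B :=
  ⟨(⟨fun b1 b2 => (e b1).2 = (e b2).2, ⟨fun _ => rfl, Eq.symm, Eq.trans⟩⟩,
    ⟨fun b1 b2 => (e b1).1 = (e b2).1, ⟨fun _ => rfl, Eq.symm, Eq.trans⟩⟩), by
    constructor
    · intro x y
      constructor
      · rintro ⟨h2, h1⟩
        apply e.injective
        exact Prod.ext h1 h2
      · rintro rfl; exact ⟨rfl, rfl⟩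
    · intro x y
      refine ⟨e.symm ((e y).1, (e x).2), ?_, ?_⟩
      · show (e x).2 = (e (e.symm ((e y).1, (e x).2))).2
        simp
      · show (e (e.symm ((e y).1, (e x).2))).1 = (e y).1
        simp⟩

lemma gridPair_rel1 {A D : Type*} (e : B ≃ A × D) (b1 b2 : B) :
    (gridPair e).1.1 b1 b2 ↔ (e b1).2 = (e b2).2 := Iff.rfl

lemma gridPair_rel2 {A D : Type*} (e : B ≃ A × D) (b1 b2 : B) :
    (gridPair e).1.2 b1 b2 ↔ (e b1).1 = (e b2).1 := Iff.rfl

noncomputable def gridPair_cls2 {A D : Type*} (e : B ≃ A × D) (b : B) :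
    cls (gridPair e).1.2 b ≃ D where
  toFun y := (e y.1).2
  invFun d := ⟨e.symm ((e b).1, d), by
    show (e b).1 = (e (e.symm ((e b).1, d))).1
    simp⟩
  left_inv y := by
    apply Subtype.ext
    have hy : (e b).1 = (e y.1).1 := y.2
    show e.symm ((e b).1, (e y.1).2) = y.1
    rw [hy]
    exact e.symm_apply_apply y.1
  right_inv d := by simp

noncomputable def gridPair_cls1 {A D : Type*} (e : B ≃ A × D) (b : B) :
    cls (gridPair e).1.1 b ≃ A where
  toFun y := (e y.1).1
  invFun a := ⟨e.symm (a, (e b).2), by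
    show (e b).2 = (e (e.symm (a, (e b).2))).2
    simp⟩
  left_inv y := by
    apply Subtype.ext
    have hy : (e b).2 = (e y.1).2 := y.2
    show e.symm ((e y.1).1, (e b).2) = y.1
    rw [hy]
    exact e.symm_apply_apply y.1
  right_inv a := by simp

lemma gridPair_isNRel {A D : Type*} (e : B ≃ A × D) :
    IsNRel (Nat.card D) (gridPair e).1.2 := fun b =>
  Nat.card_congr (gridPair_cls2 e b)

end FactProof
namespace FactProof

variable {B : Type*}

section Interval

variable (v : FactPair B) (b0 : B)

/-- Projection of `B` onto the `v.1.1`-class of `b0`, along `v.1.2`. -/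
noncomputable def proj (x : B) : cls v.1.1 b0 := ⟨gp v b0 x, gp_spec1 v b0 x⟩

lemma proj_rel (x : B) : v.1.2 (proj v b0 x).1 x := gp_spec2 v b0 x

lemma proj_eq_of {x : B} {z : cls v.1.1 b0} (h : v.1.2 z.1 x) : proj v b0 x = z :=
  Subtype.ext (gp_unique v z.2 h).symm

lemma proj_self (z : cls v.1.1 b0) : proj v b0 z.1 = z :=
  proj_eq_of v b0 (v.1.2.refl' z.1)

lemma proj_congr {x y : B} (h : v.1.2 x y) : proj v b0 x = proj v b0 y :=
  (proj_eq_of v b0 (x := y) (z := proj v b0 x)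
    (v.1.2.trans' (proj_rel v b0 x) h)).symm

lemma lift_row {u : FactPair B} (hu : FactLE v u) {a : cls v.1.1 b0} {w : B}
    (h : u.1.1 a.1 w) : u.1.1 a.1 (proj v b0 w).1 := by
  have h1 : Relation.Comp (⇑u.1.1) (⇑v.1.2) a.1 (proj v b0 w).1 :=
    ⟨w, h, v.1.2.symm' (proj_rel v b0 w)⟩
  rw [hu.2.2] at h1
  obtain ⟨w', hw1, hw2⟩ := h1
  have haw : a.1 = w' := by
    apply eq_of_both v _ hw1
    exact v.1.1.trans' (v.1.1.symm' a.2)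
      (v.1.1.trans' (proj v b0 w).2 (v.1.1.symm' (hu.1 hw2)))
  rw [haw]; exact hw2

/-- Restriction of a setoid to the class `Bv`. -/
def restr (θ : Setoid B) : Setoid (cls v.1.1 b0) :=
  ⟨fun a b => θ a.1 b.1, ⟨fun a => θ.refl' _, fun h => θ.symm' h,
    fun h1 h2 => θ.trans' h1 h2⟩⟩

lemma restr_rel (θ : Setoid B) (a b : cls v.1.1 b0) :
    (restr v b0 θ) a b ↔ θ a.1 b.1 := Iff.rfl

/-- The isomorphism `[v,1] ≅ Fact(Bv)`: downward direction. -/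
noncomputable def toSub (u : FactPair B) (hu : FactLE v u) : FactPair (cls v.1.1 b0) :=
  ⟨(restr v b0 u.1.1, restr v b0 u.1.2), by
    constructor
    · intro a b
      constructor
      · rintro ⟨h1, h2⟩
        exact Subtype.ext (eq_of_both u h1 h2)
      · rintro rfl
        exact ⟨u.1.1.refl' _, u.1.2.refl' _⟩
    · intro a b
      obtain ⟨w, hw1, hw2⟩ := comp12 u a.1 b.1
      refine ⟨proj v b0 w, lift_row v b0 hu hw1, ?_⟩
      exact u.1.2.trans' (hu.2.1 (proj_rel v b0 w)) hw2⟩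

lemma toSub_fst (u : FactPair B) (hu : FactLE v u) (a b : cls v.1.1 b0) :
    (toSub v b0 u hu).1.1 a b ↔ u.1.1 a.1 b.1 := Iff.rfl

lemma toSub_snd (u : FactPair B) (hu : FactLE v u) (a b : cls v.1.1 b0) :
    (toSub v b0 u hu).1.2 a b ↔ u.1.2 a.1 b.1 := Iff.rfl

/-- The isomorphism `[v,1] ≅ Fact(Bv)`: upward direction. -/
noncomputable def ofSub (ρ : FactPair (cls v.1.1 b0)) : FactPair B :=
  ⟨(⟨fun x y => v.1.1 x y ∧ ρ.1.1 (proj v b0 x) (proj v b0 y),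
      ⟨fun x => ⟨v.1.1.refl' x, ρ.1.1.refl' _⟩,
       fun h => ⟨v.1.1.symm' h.1, ρ.1.1.symm' h.2⟩,
       fun h1 h2 => ⟨v.1.1.trans' h1.1 h2.1, ρ.1.1.trans' h1.2 h2.2⟩⟩⟩,
    ⟨fun x y => ρ.1.2 (proj v b0 x) (proj v b0 y),
      ⟨fun x => ρ.1.2.refl' _, fun h => ρ.1.2.symm' h,
       fun h1 h2 => ρ.1.2.trans' h1 h2⟩⟩), by
    constructor
    · intro x y
      constructor
      · rintro ⟨⟨hv, h1⟩, h2⟩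
        have hp : proj v b0 x = proj v b0 y := eq_of_both ρ h1 h2
        have hxy : v.1.2 x y := by
          refine v.1.2.trans' (v.1.2.symm' (proj_rel v b0 x)) ?_
          rw [hp]; exact proj_rel v b0 y
        exact eq_of_both v hv hxy
      · rintro rfl
        exact ⟨⟨v.1.1.refl' x, ρ.1.1.refl' _⟩, ρ.1.2.refl' _⟩
    · intro x y
      obtain ⟨δ, hδ1, hδ2⟩ := comp12 ρ (proj v b0 x) (proj v b0 y)
      refine ⟨gp v x δ.1, ⟨gp_spec1 v x δ.1, ?_⟩, ?_⟩
      · rw [proj_eq_of v b0 (v.1.2.symm' (gp_spec2 v x δ.1))]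
        exact hδ1
      · show ρ.1.2 (proj v b0 (gp v x δ.1)) (proj v b0 y)
        rw [proj_eq_of v b0 (v.1.2.symm' (gp_spec2 v x δ.1))]
        exact hδ2⟩

lemma ofSub_fst (ρ : FactPair (cls v.1.1 b0)) (x y : B) :
    (ofSub v b0 ρ).1.1 x y ↔ v.1.1 x y ∧ ρ.1.1 (proj v b0 x) (proj v b0 y) := Iff.rfl

lemma ofSub_snd (ρ : FactPair (cls v.1.1 b0)) (x y : B) :
    (ofSub v b0 ρ).1.2 x y ↔ ρ.1.2 (proj v b0 x) (proj v b0 y) := Iff.rfl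

/-- `Comp (ofSub ρ).1.1 τ` evaluated, where `τ` is a setoid between `v.1.2` and
"σ₂ pulled back": the two crucial composition computations. -/
lemma comp_ofSub_left (ρ : FactPair (cls v.1.1 b0)) (σ₂ : Setoid (cls v.1.1 b0))
    (x y : B) :
    Relation.Comp (⇑(ofSub v b0 ρ).1.1) (fun a b => σ₂ (proj v b0 a) (proj v b0 b)) x y ↔
      Relation.Comp (⇑ρ.1.1) (⇑σ₂) (proj v b0 x) (proj v b0 y) := by
  constructor
  · rintro ⟨z, ⟨hv, hρ⟩, h2⟩
    exact ⟨proj v b0 z, hρ, h2⟩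
  · rintro ⟨δ, h1, h2⟩
    refine ⟨gp v x δ.1, ⟨gp_spec1 v x δ.1, ?_⟩, ?_⟩
    · rw [proj_eq_of v b0 (v.1.2.symm' (gp_spec2 v x δ.1))]; exact h1
    · show σ₂ (proj v b0 (gp v x δ.1)) (proj v b0 y)
      rw [proj_eq_of v b0 (v.1.2.symm' (gp_spec2 v x δ.1))]; exact h2

lemma comp_ofSub_right (ρ : FactPair (cls v.1.1 b0)) (σ₂ : Setoid (cls v.1.1 b0))
    (x y : B) :
    Relation.Comp (fun a b => σ₂ (proj v b0 a) (proj v b0 b)) (⇑(ofSub v b0 ρ).1.1) x y ↔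
      Relation.Comp (⇑σ₂) (⇑ρ.1.1) (proj v b0 x) (proj v b0 y) := by
  constructor
  · rintro ⟨z, h1, hv, hρ⟩
    exact ⟨proj v b0 z, h1, hρ⟩
  · rintro ⟨δ, h1, h2⟩
    refine ⟨gp v y δ.1, ?_, v.1.1.symm' (gp_spec1 v y δ.1), ?_⟩
    · show σ₂ (proj v b0 x) (proj v b0 (gp v y δ.1))
      rw [proj_eq_of v b0 (v.1.2.symm' (gp_spec2 v y δ.1))]; exact h1
    · show ρ.1.1 (proj v b0 (gp v y δ.1)) (proj v b0 y)
      rw [proj_eq_of v b0 (v.1.2.symm' (gp_spec2 v y δ.1))]; exact h2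

/-- `v ≤ ofSub ρ`. -/
lemma le_ofSub (ρ : FactPair (cls v.1.1 b0)) : FactLE v (ofSub v b0 ρ) := by
  refine ⟨Setoid.le_def.mpr (fun h => h.1),
    Setoid.le_def.mpr (fun {x y} h => by
      show ρ.1.2 (proj v b0 x) (proj v b0 y)
      rw [proj_congr v b0 h]), ?_⟩
  -- Comp (ofSub ρ).1.1 v.1.2 = Comp v.1.2 (ofSub ρ).1.1
  funext x y
  apply propext
  constructor
  · rintro ⟨z, ⟨hv, hρ⟩, h2⟩
    rw [proj_congr v b0 h2] at hρ
    refine ⟨gp v y (proj v b0 x).1,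
      v.1.2.trans' (v.1.2.symm' (proj_rel v b0 x)) (v.1.2.symm' (gp_spec2 v y _)), ?_, ?_⟩
    · exact v.1.1.symm' (gp_spec1 v y _)
    · show ρ.1.1 (proj v b0 (gp v y (proj v b0 x).1)) (proj v b0 y)
      rw [proj_eq_of v b0 (v.1.2.symm' (gp_spec2 v y (proj v b0 x).1))]
      exact hρ
  · rintro ⟨z, h1, hv, hρ⟩
    rw [← proj_congr v b0 h1] at hρ
    refine ⟨gp v x (proj v b0 y).1, ⟨gp_spec1 v x _, ?_⟩,
      v.1.2.trans' (gp_spec2 v x _) (proj_rel v b0 y)⟩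
    show ρ.1.1 (proj v b0 x) (proj v b0 (gp v x (proj v b0 y).1))
    rw [proj_eq_of v b0 (v.1.2.symm' (gp_spec2 v x (proj v b0 y).1))]
    exact hρ

end Interval
end FactProof
namespace FactProof

variable {B : Type*}

section Interval2

variable (v : FactPair B) (b0 : B)

lemma toSub_ofSub (ρ : FactPair (cls v.1.1 b0)) :
    toSub v b0 (ofSub v b0 ρ) (le_ofSub v b0 ρ) = ρ := by
  apply factpair_ext
  · apply setoid_ext'
    intro a b
    show (v.1.1 a.1 b.1 ∧ ρ.1.1 (proj v b0 a.1) (proj v b0 b.1)) ↔ ρ.1.1 a b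
    rw [proj_self, proj_self]
    exact ⟨fun h => h.2, fun h => ⟨v.1.1.trans' (v.1.1.symm' a.2) b.2, h⟩⟩
  · apply setoid_ext'
    intro a b
    show ρ.1.2 (proj v b0 a.1) (proj v b0 b.1) ↔ ρ.1.2 a b
    rw [proj_self, proj_self]

lemma ofSub_toSub (u : FactPair B) (hu : FactLE v u) :
    ofSub v b0 (toSub v b0 u hu) = u := by
  apply factpair_ext
  · apply setoid_ext'
    intro x y
    show (v.1.1 x y ∧ u.1.1 (proj v b0 x).1 (proj v b0 y).1) ↔ u.1.1 x y
    constructor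
    · rintro ⟨hv, hρ⟩
      have hc : Relation.Comp (⇑v.1.2) (⇑u.1.1) x (proj v b0 y).1 :=
        ⟨(proj v b0 x).1, v.1.2.symm' (proj_rel v b0 x), hρ⟩
      rw [← hu.2.2] at hc
      obtain ⟨z, hz1, hz2⟩ := hc
      have hzy : z = y := by
        apply eq_of_both v
        · exact v.1.1.trans' (v.1.1.symm' (hu.1 hz1)) hv
        · exact v.1.2.trans' hz2 (proj_rel v b0 y)
      rw [← hzy]; exact hz1
    · intro h
      refine ⟨hu.1 h, ?_⟩
      have hc : Relation.Comp (⇑u.1.1) (⇑v.1.2) x (proj v b0 y).1 :=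
        ⟨y, h, v.1.2.symm' (proj_rel v b0 y)⟩
      rw [hu.2.2] at hc
      obtain ⟨z, hz1, hz2⟩ := hc
      have hz0 : v.1.1 b0 z :=
        v.1.1.trans' (proj v b0 y).2 (v.1.1.symm' (hu.1 hz2))
      have hpx : proj v b0 x = ⟨z, hz0⟩ := proj_eq_of v b0 (v.1.2.symm' hz1)
      rw [hpx]
      exact hz2
  · apply setoid_ext'
    intro x y
    show u.1.2 (proj v b0 x).1 (proj v b0 y).1 ↔ u.1.2 x y
    constructor
    · intro h
      exact u.1.2.trans' (u.1.2.trans' (u.1.2.symm' (hu.2.1 (proj_rel v b0 x))) h)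
        (hu.2.1 (proj_rel v b0 y))
    · intro h
      exact u.1.2.trans' (u.1.2.trans' (hu.2.1 (proj_rel v b0 x)) h)
        (u.1.2.symm' (hu.2.1 (proj_rel v b0 y)))

/-- The interval `[v,1]` is isomorphic to `Fact(Bv)`. -/
noncomputable def upEquiv : {u : FactPair B // FactLE v u} ≃ FactPair (cls v.1.1 b0) where
  toFun w := toSub v b0 w.1 w.2
  invFun ρ := ⟨ofSub v b0 ρ, le_ofSub v b0 ρ⟩
  left_inv w := Subtype.ext (ofSub_toSub v b0 w.1 w.2)
  right_inv ρ := toSub_ofSub v b0 ρ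

lemma toSub_mono {u w : FactPair B} (hu : FactLE v u) (hw : FactLE v w)
    (h : FactLE u w) : FactLE (toSub v b0 u hu) (toSub v b0 w hw) := by
  refine ⟨Setoid.le_def.mpr (fun hab => h.1 hab),
    Setoid.le_def.mpr (fun hab => h.2.1 hab), ?_⟩
  funext a b
  apply propext
  have LHS : Relation.Comp (⇑(toSub v b0 w hw).1.1) (⇑(toSub v b0 u hu).1.2) a b ↔
      Relation.Comp (⇑w.1.1) (⇑u.1.2) a.1 b.1 := by
    constructor
    · rintro ⟨z, hz1, hz2⟩; exact ⟨z.1, hz1, hz2⟩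
    · rintro ⟨z, hz1, hz2⟩
      exact ⟨proj v b0 z, lift_row v b0 hw hz1,
        u.1.2.trans' (hu.2.1 (proj_rel v b0 z)) hz2⟩
  have RHS : Relation.Comp (⇑(toSub v b0 u hu).1.2) (⇑(toSub v b0 w hw).1.1) a b ↔
      Relation.Comp (⇑u.1.2) (⇑w.1.1) a.1 b.1 := by
    constructor
    · rintro ⟨z, hz1, hz2⟩; exact ⟨z.1, hz1, hz2⟩
    · rintro ⟨z, hz1, hz2⟩
      refine ⟨proj v b0 z, u.1.2.trans' hz1 (u.1.2.symm' (hu.2.1 (proj_rel v b0 z))), ?_⟩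
      exact (toSub v b0 w hw).1.1.symm' (lift_row v b0 hw (w.1.1.symm' hz2))
  rw [LHS, RHS]
  exact iff_of_eq (congrFun (congrFun h.2.2 a.1) b.1)

lemma ofSub_mono {σ τ : FactPair (cls v.1.1 b0)} (h : FactLE σ τ) :
    FactLE (ofSub v b0 σ) (ofSub v b0 τ) := by
  refine ⟨Setoid.le_def.mpr (fun hab => ⟨hab.1, h.1 hab.2⟩),
    Setoid.le_def.mpr (fun hab => h.2.1 hab), ?_⟩
  funext x y
  apply propext
  have e1 : Relation.Comp (⇑(ofSub v b0 τ).1.1) (⇑(ofSub v b0 σ).1.2) x y ↔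
      Relation.Comp (⇑τ.1.1) (⇑σ.1.2) (proj v b0 x) (proj v b0 y) :=
    comp_ofSub_left v b0 τ σ.1.2 x y
  have e2 : Relation.Comp (⇑(ofSub v b0 σ).1.2) (⇑(ofSub v b0 τ).1.1) x y ↔
      Relation.Comp (⇑σ.1.2) (⇑τ.1.1) (proj v b0 x) (proj v b0 y) :=
    comp_ofSub_right v b0 τ σ.1.2 x y
  rw [e1, e2]
  exact iff_of_eq (congrFun (congrFun h.2.2 _) _)

lemma upEquiv_le_iff (w1 w2 : {u : FactPair B // FactLE v u}) :
    FactLE w1.1 w2.1 ↔ FactLE (upEquiv v b0 w1) (upEquiv v b0 w2) := by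
  constructor
  · intro h
    exact toSub_mono v b0 w1.2 w2.2 h
  · intro h
    have := ofSub_mono v b0 h
    rw [show (upEquiv v b0 w1) = toSub v b0 w1.1 w1.2 from rfl,
      show (upEquiv v b0 w2) = toSub v b0 w2.1 w2.2 from rfl,
      ofSub_toSub v b0 w1.1 w1.2, ofSub_toSub v b0 w2.1 w2.2] at this
    exact this

/-- Multiplicativity: the `u.1.2`-class of `x` is the product of the `v.1.2`-class
of `x` and the relative class. -/
noncomputable def clsProdEquiv {u : FactPair B} (hu : FactLE v u) (x : B) :
    cls u.1.2 x ≃ cls v.1.2 x × cls (toSub v b0 u hu).1.2 (proj v b0 x) where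
  toFun y :=
    (⟨gp v y.1 (proj v b0 x).1,
      v.1.2.trans' (v.1.2.symm' (proj_rel v b0 x))
        (v.1.2.symm' (gp_spec2 v y.1 (proj v b0 x).1))⟩,
     ⟨proj v b0 y.1, by
        show u.1.2 (proj v b0 x).1 (proj v b0 y.1).1
        exact u.1.2.trans' (u.1.2.trans' (hu.2.1 (proj_rel v b0 x)) y.2)
          (u.1.2.symm' (hu.2.1 (proj_rel v b0 y.1)))⟩)
  invFun p := ⟨gp v p.1.1 p.2.1.1, by
    have h1 : u.1.2 x p.1.1 := hu.2.1 p.1.2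
    have h2 : u.1.2 (proj v b0 x).1 p.2.1.1 := p.2.2
    have h3 : v.1.2 (gp v p.1.1 p.2.1.1) p.2.1.1 := gp_spec2 v _ _
    exact u.1.2.trans' (u.1.2.trans' (u.1.2.trans' h1
      (u.1.2.symm' (hu.2.1 (proj_rel v b0 p.1.1))))
      (by
        have hv : (proj v b0 x).1 = (proj v b0 p.1.1).1 :=
          congrArg Subtype.val (proj_congr v b0 p.1.2)
        rw [← hv]; exact h2)) (u.1.2.symm' (hu.2.1 h3))⟩
  left_inv y := by
    apply Subtype.ext
    show gp v (gp v y.1 (proj v b0 x).1) (proj v b0 y.1).1 = y.1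
    exact (gp_unique v (v.1.1.symm' (gp_spec1 v y.1 (proj v b0 x).1))
      (v.1.2.symm' (proj_rel v b0 y.1))).symm
  right_inv p := by
    obtain ⟨⟨w, hw⟩, ⟨δ, hδ⟩⟩ := p
    refine Prod.ext (Subtype.ext ?_) (Subtype.ext ?_)
    · show gp v (gp v w δ.1) (proj v b0 x).1 = w
      refine (gp_unique v (v.1.1.symm' (gp_spec1 v w δ.1)) ?_).symm
      exact v.1.2.trans' (v.1.2.symm' hw) (v.1.2.symm' (proj_rel v b0 x))
    · show proj v b0 (gp v w δ.1) = δ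
      exact proj_eq_of v b0 (v.1.2.symm' (gp_spec2 v w δ.1))

lemma isNRel_up {u : FactPair B} (hu : FactLE v u) {p k : ℕ}
    (hp : IsNRel p v.1.2) (hk : IsNRel k (toSub v b0 u hu).1.2) :
    IsNRel (p * k) u.1.2 := by
  intro x
  rw [Nat.card_congr (clsProdEquiv v b0 hu x), Nat.card_prod, hp x, hk (proj v b0 x)]

lemma isNRel_down {u : FactPair B} (hu : FactLE v u) {n p k : ℕ}
    (hn : IsNRel n u.1.2) (hp : IsNRel p v.1.2) (hp0 : 0 < p) (hpk : n = p * k) :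
    IsNRel k (toSub v b0 u hu).1.2 := by
  intro δ
  have h := hn δ.1
  rw [Nat.card_congr (clsProdEquiv v b0 hu δ.1), Nat.card_prod, hp δ.1,
    proj_self v b0 δ, hpk] at h
  exact (Nat.eq_of_mul_eq_mul_left hp0 h.symm).symm

end Interval2
end FactProof
namespace FactProof

variable {B : Type*}

section Down

variable (u : FactPair B) (b0 : B)

def perpSubEquiv : {x : FactPair B // FactLE x u} ≃ {w : FactPair B // FactLE (FactPerp u) w} where
  toFun x := ⟨FactPerp x.1, by
    have h := perp_le_perp x.2
    exact h⟩
  invFun w := ⟨FactPerp w.1, by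
    have h := perp_le_perp w.2
    rwa [perp_perp] at h⟩
  left_inv x := Subtype.ext (perp_perp x.1)
  right_inv w := Subtype.ext (perp_perp w.1)

/-- The interval `[0,u]` is isomorphic to `Fact(C)` where `C` is the `u.1.2`-class
of `b0`. -/
noncomputable def downEquiv :
    {x : FactPair B // FactLE x u} ≃ FactPair (cls (FactPerp u).1.1 b0) :=
  ((perpSubEquiv u).trans (upEquiv (FactPerp u) b0)).trans
    ⟨FactPerp, FactPerp, perp_perp, perp_perp⟩

lemma downEquiv_eq (x : {x : FactPair B // FactLE x u}) :
    downEquiv u b0 x = FactPerp (upEquiv (FactPerp u) b0 (perpSubEquiv u x)) := rfl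

lemma downEquiv_le_iff (x y : {x : FactPair B // FactLE x u}) :
    FactLE x.1 y.1 ↔ FactLE (downEquiv u b0 x) (downEquiv u b0 y) := by
  rw [downEquiv_eq, downEquiv_eq, perp_le_iff]
  rw [← upEquiv_le_iff (FactPerp u) b0 (perpSubEquiv u y) (perpSubEquiv u x)]
  show FactLE x.1 y.1 ↔ FactLE (FactPerp y.1) (FactPerp x.1)
  rw [perp_le_iff]

lemma downEquiv_zero :
    downEquiv u b0 ⟨FactZero B, factZero_le u⟩ = FactZero (cls (FactPerp u).1.1 b0) := by
  apply factpair_ext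
  · apply setoid_ext'
    intro a b
    exact ⟨fun _ => top_rel a b, fun _ => top_rel a.1 b.1⟩
  · apply setoid_ext'
    intro a b
    show (FactZero B).1.2 a.1 b.1 ↔ (⊥ : Setoid (cls (FactPerp u).1.1 b0)) a b
    rw [bot_rel]
    exact ⟨fun h => Subtype.ext ((bot_rel a.1 b.1).mp h),
      fun h => (bot_rel a.1 b.1).mpr (congrArg Subtype.val h)⟩

lemma downEquiv_self :
    downEquiv u b0 ⟨u, factLE_refl u⟩ = FactOne (cls (FactPerp u).1.1 b0) := by
  apply factpair_ext
  · apply setoid_ext'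
    intro a b
    show u.1.1 a.1 b.1 ↔ (⊥ : Setoid (cls (FactPerp u).1.1 b0)) a b
    rw [bot_rel]
    constructor
    · intro h
      exact Subtype.ext (eq_of_both u h (u.1.2.trans' (u.1.2.symm' a.2) b.2))
    · rintro rfl
      exact u.1.1.refl' a.1
  · apply setoid_ext'
    intro a b
    exact ⟨fun _ => top_rel a b, fun _ => u.1.2.trans' (u.1.2.symm' a.2) b.2⟩

lemma downEquiv_sndRel (x : {x : FactPair B // FactLE x u})
    (a b : cls (FactPerp u).1.1 b0) :
    (downEquiv u b0 x).1.2 a b ↔ x.1.1.2 a.1 b.1 := Iff.rfl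

lemma downEquiv_fstRel (x : {x : FactPair B // FactLE x u})
    (a b : cls (FactPerp u).1.1 b0) :
    (downEquiv u b0 x).1.1 a b ↔ x.1.1.1 a.1 b.1 := Iff.rfl

lemma downEquiv_isNRel_iff (x : {x : FactPair B // FactLE x u}) (n : ℕ) :
    IsNRel n (downEquiv u b0 x).1.2 ↔ IsNRel n x.1.1.2 := by
  have pt : cls (FactPerp u).1.1 b0 := ⟨b0, (FactPerp u).1.1.refl' b0⟩
  have e : cls (downEquiv u b0 x).1.2 pt ≃ cls x.1.1.2 pt.1 :=
    { toFun := fun δ => ⟨δ.1.1, δ.2⟩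
      invFun := fun y => ⟨⟨y.1, (FactPerp u).1.1.trans' pt.2 (x.2.2.1 y.2)⟩, y.2⟩
      left_inv := fun δ => Subtype.ext (Subtype.ext rfl)
      right_inv := fun y => Subtype.ext rfl }
  rw [isNRel2_iff_point (downEquiv u b0 x) pt, isNRel2_iff_point x.1 pt.1,
    Nat.card_congr e]

end Down

section AtomChar

lemma isNRel_one_snd (t : FactPair B) (h : IsNRel 1 t.1.2) : t = FactZero B := by
  have h2 : t.1.2 = ⊥ := by
    apply setoid_ext'
    intro x y
    rw [bot_rel]
    constructor
    · intro hxy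
      have hcard := h x
      rw [Nat.card_eq_one_iff_unique] at hcard
      have := hcard.1.allEq ⟨x, t.1.2.refl' x⟩ ⟨y, hxy⟩
      exact congrArg Subtype.val this
    · rintro rfl; exact t.1.2.refl' x
  have h1 : t.1.1 = ⊤ := by
    apply setoid_ext'
    intro x y
    refine ⟨fun _ => top_rel x y, fun _ => ?_⟩
    obtain ⟨z, hz1, hz2⟩ := comp12 t x y
    rw [h2, bot_rel] at hz2
    rwa [hz2] at hz1
  exact factpair_ext h1 h2

lemma isNRel_one_zero : IsNRel 1 (FactZero B).1.2 := by
  intro x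
  rw [Nat.card_eq_one_iff_unique]
  constructor
  · constructor
    intro a b
    apply Subtype.ext
    have ha : x = a.1 := (bot_rel x a.1).mp a.2
    have hb : x = b.1 := (bot_rel x b.1).mp b.2
    rw [← ha, ← hb]
  · exact ⟨⟨x, (FactZero B).1.2.refl' x⟩⟩

lemma isNRel_one_fst (t : FactPair B) (h : IsNRel 1 t.1.1) : t = FactOne B := by
  have := isNRel_one_snd (FactPerp t) h
  have h2 := congrArg FactPerp this
  rwa [perp_perp, perp_zero] at h2

lemma exists_middle {A D : Type*} (e : B ≃ A × D) (a1 a2 : A) (ha : a1 ≠ a2)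
    (d1 d2 : D) (hd : d1 ≠ d2) :
    FactLT (FactZero B) (gridPair e) ∧ FactLT (gridPair e) (FactOne B) := by
  constructor
  · refine ⟨factZero_le _, fun hEq => ?_⟩
    have hrel : (gridPair e).1.2 (e.symm (a1, d1)) (e.symm (a1, d2)) := by
      rw [gridPair_rel2]
      simp
    rw [← hEq] at hrel
    have hxy := (bot_rel _ _).mp hrel
    have := congrArg (fun z => (e z).2) hxy
    simp only [Equiv.apply_symm_apply] at this
    exact hd this
  · refine ⟨le_factOne _, fun hEq => ?_⟩
    have hrel : (gridPair e).1.2 (e.symm (a1, d1)) (e.symm (a2, d1)) := by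
      rw [hEq]
      exact top_rel _ _
    rw [gridPair_rel2] at hrel
    simp only [Equiv.apply_symm_apply] at hrel
    exact ha hrel

lemma exists_nontrivial_aux {C : Type*}
    (h : (Nat.card C = 0 ∧ Nonempty C) ∨ ∃ d1 d2, 2 ≤ d1 ∧ 2 ≤ d2 ∧ Nat.card C = d1 * d2) :
    ∃ m : FactPair C, FactLT (FactZero C) m ∧ FactLT m (FactOne C) := by
  rcases h with ⟨hc, hne⟩ | ⟨d1, d2, hd1, hd2, hc⟩
  · have : Infinite C := by
      rcases Nat.card_eq_zero.mp hc with h | h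
      · exact (hne.elim fun c => (h.false c).elim)
      · exact h
    have hcard : Cardinal.mk C = Cardinal.mk (C × C) := by
      simp only [Cardinal.mk_prod, Cardinal.lift_id]
      exact (Cardinal.mul_eq_self (Cardinal.aleph0_le_mk C)).symm
    obtain ⟨e⟩ := Cardinal.eq.mp hcard
    obtain ⟨c1, c2, hcc⟩ := exists_pair_ne C
    exact ⟨gridPair e, (exists_middle e c1 c2 hcc c1 c2 hcc).1,
      (exists_middle e c1 c2 hcc c1 c2 hcc).2⟩
  · have : Finite C := Nat.finite_of_card_ne_zero
      (by rw [hc]; exact Nat.mul_ne_zero (by omega) (by omega))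
    have e0 : C ≃ Fin (d1 * d2) := Finite.equivFinOfCardEq hc
    have e : C ≃ Fin d1 × Fin d2 := e0.trans finProdFinEquiv.symm
    have hd1' : 1 < d1 := by omega
    have hd2' : 1 < d2 := by omega
    have h1 : (⟨0, by omega⟩ : Fin d1) ≠ ⟨1, hd1'⟩ := by
      intro hcon; exact absurd (congrArg Fin.val hcon) (by simp)
    have h2 : (⟨0, by omega⟩ : Fin d2) ≠ ⟨1, hd2'⟩ := by
      intro hcon; exact absurd (congrArg Fin.val hcon) (by simp)
    exact ⟨gridPair e, (exists_middle e _ _ h1 _ _ h2).1, (exists_middle e _ _ h1 _ _ h2).2⟩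

end AtomChar
end FactProof
namespace FactProof

variable {B C : Type*}

lemma no_middle_pull (t : FactPair B) (b0 : B) (hatom : IsFactAtom t)
    {m : FactPair (cls (FactPerp t).1.1 b0)}
    (h0 : FactLT (FactZero _) m) (h1 : FactLT m (FactOne _)) : False := by
  set E := downEquiv t b0 with hE
  set y := E.symm m with hy
  have hEy : E y = m := Equiv.apply_symm_apply E m
  have hne0 : FactZero B ≠ y.1 := by
    intro h
    have : y = ⟨FactZero B, factZero_le t⟩ := Subtype.ext h.symm
    rw [this] at hEy
    rw [downEquiv_zero] at hEy
    exact h0.2 hEy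
  have hne1 : y.1 ≠ t := by
    intro h
    have : y = ⟨t, factLE_refl t⟩ := Subtype.ext h
    rw [this] at hEy
    rw [downEquiv_self] at hEy
    exact h1.2 hEy.symm
  exact hatom.2 y.1 ⟨factZero_le _, hne0⟩ ⟨y.2, hne1⟩

lemma atom_iff_prime (t : FactPair B) (b0 : B) :
    IsFactAtom t ↔ ∃ p : ℕ, Nat.Prime p ∧ IsNRel p t.1.2 := by
  constructor
  · intro hatom
    set n := Nat.card (cls t.1.2 b0) with hn
    by_cases hp : Nat.Prime n
    · exact ⟨n, hp, (isNRel2_iff_point t b0).mpr rfl⟩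
    exfalso
    have hCn : Nat.card (cls (FactPerp t).1.1 b0) = n := rfl
    rcases Nat.lt_or_ge n 2 with hsmall | hbig
    · interval_cases n
      · obtain ⟨m, hm0, hm1⟩ := exists_nontrivial_aux
          (Or.inl ⟨hCn, ⟨⟨b0, (FactPerp t).1.1.refl' b0⟩⟩⟩)
        exact no_middle_pull t b0 hatom hm0 hm1
      · have := isNRel_one_snd t ((isNRel2_iff_point t b0).mpr hn.symm)
        exact hatom.1.2 this.symm
    · have hne1 : n ≠ 1 := by omega
      have hd1 : Nat.Prime n.minFac := Nat.minFac_prime hne1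
      have hdvd := Nat.minFac_dvd n
      have hfact : n = n.minFac * (n / n.minFac) := (Nat.mul_div_cancel' hdvd).symm
      have hd2 : 2 ≤ n / n.minFac := by
        have hq0 : 0 < n / n.minFac :=
          Nat.div_pos (Nat.minFac_le (by omega)) (Nat.minFac_pos n)
        have hq1 : n / n.minFac ≠ 1 := by
          intro h; rw [h, mul_one] at hfact; rw [hfact] at hp; exact hp hd1
        omega
      obtain ⟨m, hm0, hm1⟩ := exists_nontrivial_aux
        (Or.inr ⟨n.minFac, n / n.minFac, hd1.two_le, hd2, by rw [hCn]; exact hfact⟩)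
      exact no_middle_pull t b0 hatom hm0 hm1
  · rintro ⟨p, hp, hrel⟩
    constructor
    · refine ⟨factZero_le t, fun h => ?_⟩
      have h1 : IsNRel 1 t.1.2 := by rw [← h]; exact isNRel_one_zero
      have h2 := isNRel_unique b0 hrel h1
      exact hp.one_lt.ne' h2
    · intro y hy0 hyt
      set E := downEquiv t b0 with hE
      set m := E ⟨y, hyt.1⟩ with hm
      set pt : cls (FactPerp t).1.1 b0 := ⟨b0, (FactPerp t).1.1.refl' b0⟩ with hpt
      have hc : Nat.card (cls (FactPerp t).1.1 b0) = p := hrel b0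
      have hgrid := card_eq_mul m pt
      rw [hc] at hgrid
      have hdvd : Nat.card (cls m.1.1 pt) ∣ p := ⟨Nat.card (cls m.1.2 pt), hgrid⟩
      rcases (Nat.Prime.eq_one_or_self_of_dvd hp _ hdvd) with ha | ha
      · have h1 : IsNRel 1 m.1.1 := (isNRel1_iff_point m pt).mpr ha
        have hm1 : m = FactOne _ := isNRel_one_fst m h1
        have : E ⟨y, hyt.1⟩ = E ⟨t, factLE_refl t⟩ := by
          rw [← hm, hm1, downEquiv_self]
        have := congrArg Subtype.val (E.injective this)
        exact hyt.2 this
      · have hb : Nat.card (cls m.1.2 pt) = 1 := by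
          rw [ha] at hgrid
          have hp0 : 0 < p := hp.pos
          have : p * 1 = p * Nat.card (cls m.1.2 pt) := by rw [mul_one]; exact hgrid
          exact (Nat.eq_of_mul_eq_mul_left hp0 this).symm
        have h1 : IsNRel 1 m.1.2 := (isNRel2_iff_point m pt).mpr hb
        have hm0 : m = FactZero _ := isNRel_one_snd m h1
        have : E ⟨y, hyt.1⟩ = E ⟨FactZero B, factZero_le t⟩ := by
          rw [← hm, hm0, downEquiv_zero]
        have := congrArg Subtype.val (E.injective this)
        exact hy0.2 this.symm

section Transfer

variable {u : FactPair B}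

lemma atom_transfer (E : {x : FactPair B // FactLE x u} ≃ FactPair C)
    (hle : ∀ a b : {x : FactPair B // FactLE x u}, FactLE a.1 b.1 ↔ FactLE (E a) (E b))
    (hzero : E ⟨FactZero B, factZero_le u⟩ = FactZero C)
    (x : {x : FactPair B // FactLE x u}) : IsFactAtom x.1 ↔ IsFactAtom (E x) := by
  constructor
  · intro h
    constructor
    · refine ⟨factZero_le _, fun h0 => ?_⟩
      rw [← hzero] at h0
      have := congrArg Subtype.val (E.injective h0)
      exact h.1.2 this
    · intro m hm0 hmx
      set y := E.symm m with hy
      have hEy : E y = m := Equiv.apply_symm_apply E m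
      have hyx : FactLE y.1 x.1 := (hle y x).mpr (by rw [hEy]; exact hmx.1)
      refine h.2 y.1 ⟨factZero_le _, fun h0 => ?_⟩ ⟨hyx, fun h1 => ?_⟩
      · have : ⟨FactZero B, factZero_le u⟩ = y := Subtype.ext h0
        rw [← this, hzero] at hEy
        exact hm0.2 hEy
      · have : y = x := Subtype.ext h1
        rw [this] at hEy
        exact hmx.2 hEy.symm
  · intro h
    constructor
    · refine ⟨factZero_le _, fun h0 => ?_⟩
      have hx : (⟨FactZero B, factZero_le u⟩ : {x : FactPair B // FactLE x u}) = x :=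
        Subtype.ext h0
      have : FactZero C = E x := by rw [← hx, hzero]
      exact h.1.2 this
    · intro z hz0 hzx
      have hzu : FactLE z u := factLE_trans hzx.1 x.2
      set m := E ⟨z, hzu⟩ with hm
      refine h.2 m ⟨factZero_le _, fun h0 => ?_⟩ ⟨(hle ⟨z, hzu⟩ x).mp hzx.1, fun h1 => ?_⟩
      · rw [← hzero] at h0
        have := congrArg Subtype.val (E.injective h0)
        exact hz0.2 this
      · have := congrArg Subtype.val (E.injective h1)
        exact hzx.2 this

noncomputable def atomsBelowEquiv (E : {x : FactPair B // FactLE x u} ≃ FactPair C)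
    (hle : ∀ a b : {x : FactPair B // FactLE x u}, FactLE a.1 b.1 ↔ FactLE (E a) (E b))
    (hzero : E ⟨FactZero B, factZero_le u⟩ = FactZero C) :
    {x : FactPair B // IsFactAtom x ∧ FactLE x u} ≃ {m : FactPair C // IsFactAtom m} where
  toFun x := ⟨E ⟨x.1, x.2.2⟩, (atom_transfer E hle hzero _).1 x.2.1⟩
  invFun m := ⟨(E.symm m.1).1, by
    have ha : IsFactAtom (E (E.symm m.1)) := by
      rw [Equiv.apply_symm_apply]; exact m.2
    exact ⟨(atom_transfer E hle hzero (E.symm m.1)).2 ha, (E.symm m.1).2⟩⟩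
  left_inv x := by
    apply Subtype.ext
    show (E.symm (E ⟨x.1, x.2.2⟩)).1 = x.1
    rw [Equiv.symm_apply_apply]
  right_inv m := by
    apply Subtype.ext
    show E (E.symm m.1) = m.1
    rw [Equiv.apply_symm_apply]

end Transfer
end FactProof
namespace FactProof

variable {B C : Type*}

/-- Transport of a factor pair along a bijection. -/
def mapPair (e : B ≃ C) (t : FactPair B) : FactPair C :=
  ⟨(⟨fun x y => t.1.1 (e.symm x) (e.symm y),
      ⟨fun x => t.1.1.refl' _, fun h => t.1.1.symm' h, fun h1 h2 => t.1.1.trans' h1 h2⟩⟩,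
    ⟨fun x y => t.1.2 (e.symm x) (e.symm y),
      ⟨fun x => t.1.2.refl' _, fun h => t.1.2.symm' h, fun h1 h2 => t.1.2.trans' h1 h2⟩⟩), by
    constructor
    · intro x y
      constructor
      · rintro ⟨h1, h2⟩
        have := eq_of_both t h1 h2
        have := congrArg e this
        simpa using this
      · rintro rfl
        exact ⟨t.1.1.refl' _, t.1.2.refl' _⟩
    · intro x y
      obtain ⟨z, h1, h2⟩ := comp12 t (e.symm x) (e.symm y)
      refine ⟨e z, ?_, ?_⟩
      · show t.1.1 (e.symm x) (e.symm (e z)); simpa using h1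
      · show t.1.2 (e.symm (e z)) (e.symm y); simpa using h2⟩

lemma mapPair_fst (e : B ≃ C) (t : FactPair B) (x y : C) :
    (mapPair e t).1.1 x y ↔ t.1.1 (e.symm x) (e.symm y) := Iff.rfl

lemma mapPair_snd (e : B ≃ C) (t : FactPair B) (x y : C) :
    (mapPair e t).1.2 x y ↔ t.1.2 (e.symm x) (e.symm y) := Iff.rfl

lemma mapPair_mapPair (e : B ≃ C) (t : FactPair B) :
    mapPair e.symm (mapPair e t) = t := by
  apply factpair_ext <;> apply setoid_ext' <;> intro x y
  · show t.1.1 (e.symm (e.symm.symm x)) (e.symm (e.symm.symm y)) ↔ t.1.1 x y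
    simp
  · show t.1.2 (e.symm (e.symm.symm x)) (e.symm (e.symm.symm y)) ↔ t.1.2 x y
    simp

/-- `mapPair` as an equivalence of `FactPair`s. -/
def mapPairEquiv (e : B ≃ C) : FactPair B ≃ FactPair C where
  toFun := mapPair e
  invFun := mapPair e.symm
  left_inv := mapPair_mapPair e
  right_inv t := by
    have := mapPair_mapPair e.symm t
    rwa [Equiv.symm_symm] at this

lemma mapPair_comp (e : B ≃ C) (θ φ : Setoid B) (x y : C) :
    Relation.Comp (fun a b => θ (e.symm a) (e.symm b))
      (fun a b => φ (e.symm a) (e.symm b)) x y ↔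
    Relation.Comp (⇑θ) (⇑φ) (e.symm x) (e.symm y) := by
  constructor
  · rintro ⟨z, h1, h2⟩
    exact ⟨e.symm z, h1, h2⟩
  · rintro ⟨w, h1, h2⟩
    refine ⟨e w, ?_, ?_⟩
    · show θ (e.symm x) (e.symm (e w)); simpa using h1
    · show φ (e.symm (e w)) (e.symm y); simpa using h2

lemma mapPair_le_iff (e : B ≃ C) (s t : FactPair B) :
    FactLE s t ↔ FactLE (mapPair e s) (mapPair e t) := by
  constructor
  · rintro ⟨h1, h2, h3⟩
    refine ⟨Setoid.le_def.mpr (fun h => h1 h), Setoid.le_def.mpr (fun h => h2 h), ?_⟩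
    funext x y
    apply propext
    rw [show (⇑(mapPair e t).1.1) = (fun a b => t.1.1 (e.symm a) (e.symm b)) from rfl,
      show (⇑(mapPair e s).1.2) = (fun a b => s.1.2 (e.symm a) (e.symm b)) from rfl,
      mapPair_comp e, mapPair_comp e, h3]
  · rintro ⟨h1, h2, h3⟩
    refine ⟨Setoid.le_def.mpr (fun {x y} h => ?_), Setoid.le_def.mpr (fun {x y} h => ?_), ?_⟩
    · have := @h1 (e x) (e y)
      simp only [mapPair_fst, Equiv.symm_apply_apply] at this
      exact this h
    · have := @h2 (e x) (e y)
      simp only [mapPair_snd, Equiv.symm_apply_apply] at this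
      exact this h
    · funext x y
      apply propext
      have h3' := congrFun (congrFun h3 (e x)) (e y)
      rw [show (⇑(mapPair e t).1.1) = (fun a b => t.1.1 (e.symm a) (e.symm b)) from rfl,
        show (⇑(mapPair e s).1.2) = (fun a b => s.1.2 (e.symm a) (e.symm b)) from rfl] at h3'
      rw [mapPair_comp e, mapPair_comp e] at *
      have h3'' := iff_of_eq h3'
      simp only [Equiv.symm_apply_apply] at h3''
      exact h3''
  
lemma mapPair_zero (e : B ≃ C) : mapPair e (FactZero B) = FactZero C := by
  apply factpair_ext <;> apply setoid_ext' <;> intro x y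
  · exact ⟨fun _ => top_rel x y, fun _ => top_rel _ _⟩
  · show (⊥ : Setoid B) (e.symm x) (e.symm y) ↔ (⊥ : Setoid C) x y
    rw [bot_rel, bot_rel]
    exact ⟨fun h => by simpa using congrArg e h, fun h => by rw [h]⟩

lemma mapPair_isNRel_iff (e : B ≃ C) (t : FactPair B) (n : ℕ) :
    IsNRel n (mapPair e t).1.2 ↔ IsNRel n t.1.2 := by
  constructor
  · intro h x
    have := h (e x)
    have heq : {y // (mapPair e t).1.2 (e x) y} ≃ {y // t.1.2 x y} := by
      refine e.symm.subtypeEquiv fun y => ?_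
      rw [mapPair_snd]
      simp
    rwa [Nat.card_congr heq] at this
  · intro h x
    have := h (e.symm x)
    have heq : {y // (mapPair e t).1.2 x y} ≃ {y // t.1.2 (e.symm x) y} :=
      e.symm.subtypeEquiv fun y => Iff.rfl
    rwa [Nat.card_congr heq]

lemma mapPair_atom_iff (e : B ≃ C) (t : FactPair B) :
    IsFactAtom t ↔ IsFactAtom (mapPair e t) := by
  constructor
  · intro h
    constructor
    · refine ⟨factZero_le _, fun h0 => ?_⟩
      have : mapPair e.symm (FactZero C) = mapPair e.symm (mapPair e t) := by rw [h0]
      rw [mapPair_mapPair, mapPair_zero] at this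
      exact h.1.2 this
    · intro m hm0 hmt
      refine h.2 (mapPair e.symm m) ⟨factZero_le _, fun h0 => ?_⟩
        ⟨?_, fun h1 => ?_⟩
      · have : mapPair e (FactZero B) = mapPair e (mapPair e.symm m) := by rw [h0]
        rw [mapPair_zero] at this
        have h2 : mapPair e (mapPair e.symm m) = m := (mapPairEquiv e).apply_symm_apply m
        rw [h2] at this
        exact hm0.2 this
      · have := (mapPair_le_iff e.symm m (mapPair e t)).mp hmt.1
        rwa [mapPair_mapPair] at this
      · have : mapPair e (mapPair e.symm m) = mapPair e t := by rw [h1]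
        have h2 : mapPair e (mapPair e.symm m) = m := (mapPairEquiv e).apply_symm_apply m
        rw [h2] at this
        exact hmt.2 this
  · intro h
    constructor
    · refine ⟨factZero_le _, fun h0 => ?_⟩
      have : mapPair e (FactZero B) = mapPair e t := by rw [h0]
      rw [mapPair_zero] at this
      exact h.1.2 this
    · intro y hy0 hyt
      refine h.2 (mapPair e y) ⟨factZero_le _, fun h0 => ?_⟩
        ⟨(mapPair_le_iff e y t).mp hyt.1, fun h1 => ?_⟩
      · rw [← mapPair_zero e] at h0
        exact hy0.2 ((mapPairEquiv e).injective h0)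
      · exact hyt.2 ((mapPairEquiv e).injective h1)

/-- Transport of atoms along a bijection of the base sets. -/
noncomputable def mapAtomsEquiv (e : B ≃ C) :
    {t : FactPair B // IsFactAtom t} ≃ {m : FactPair C // IsFactAtom m} :=
  (mapPairEquiv e).subtypeEquiv fun t => mapPair_atom_iff e t

end FactProof
namespace FactProof

variable {B : Type*}

lemma gridEquiv_fst_eq_iff (t : FactPair B) (x₀ a b : B) :
    (gridEquiv t x₀ a).1 = (gridEquiv t x₀ b).1 ↔ t.1.2 a b := by
  show (⟨gp (FactPerp t) a x₀, _⟩ : cls t.1.1 x₀) = ⟨gp (FactPerp t) b x₀, _⟩ ↔ _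
  rw [Subtype.mk.injEq]
  constructor
  · intro h
    have ha : t.1.2 a (gp (FactPerp t) a x₀) := gp_spec1 (FactPerp t) a x₀
    have hb : t.1.2 b (gp (FactPerp t) b x₀) := gp_spec1 (FactPerp t) b x₀
    rw [← h] at hb
    exact t.1.2.trans' ha (t.1.2.symm' hb)
  · intro h
    apply gp_unique (FactPerp t)
    · exact t.1.2.trans' (t.1.2.symm' h) (gp_spec1 (FactPerp t) a x₀)
    · exact gp_spec2 (FactPerp t) a x₀

lemma gridEquiv_snd_eq_iff (t : FactPair B) (x₀ a b : B) :
    (gridEquiv t x₀ a).2 = (gridEquiv t x₀ b).2 ↔ t.1.1 a b := by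
  show (⟨gp t a x₀, _⟩ : cls t.1.2 x₀) = ⟨gp t b x₀, _⟩ ↔ _
  rw [Subtype.mk.injEq]
  constructor
  · intro h
    have ha : t.1.1 a (gp t a x₀) := gp_spec1 t a x₀
    have hb : t.1.1 b (gp t b x₀) := gp_spec1 t b x₀
    rw [← h] at hb
    exact t.1.1.trans' ha (t.1.1.symm' hb)
  · intro h
    apply gp_unique t
    · exact t.1.1.trans' (t.1.1.symm' h) (gp_spec1 t a x₀)
    · exact gp_spec2 t a x₀

section Counting

variable {n d k : ℕ}

def theta (e : Fin n ≃ Fin k × Fin d) : {x : FactPair (Fin n) // IsNRel d x.1.2} :=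
  ⟨gridPair e, by
    have := gridPair_isNRel e
    simpa using this⟩

def act (g : Equiv.Perm (Fin k) × Equiv.Perm (Fin d)) (e : Fin n ≃ Fin k × Fin d) :
    Fin n ≃ Fin k × Fin d :=
  e.trans (Equiv.prodCongr g.1 g.2)

lemma theta_act (g : Equiv.Perm (Fin k) × Equiv.Perm (Fin d)) (e : Fin n ≃ Fin k × Fin d) :
    theta (act g e) = theta e := by
  apply Subtype.ext
  apply factpair_ext <;> apply setoid_ext' <;> intro x y
  · show (Equiv.prodCongr g.1 g.2 (e x)).2 = (Equiv.prodCongr g.1 g.2 (e y)).2 ↔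
      (e x).2 = (e y).2
    simp only [Equiv.prodCongr_apply, Prod.map_snd]
    exact g.2.injective.eq_iff
  · show (Equiv.prodCongr g.1 g.2 (e x)).1 = (Equiv.prodCongr g.1 g.2 (e y)).1 ↔
      (e x).1 = (e y).1
    simp only [Equiv.prodCongr_apply, Prod.map_fst]
    exact g.1.injective.eq_iff

lemma theta_rigid (hd : 0 < d) (hk : 0 < k) {e e' : Fin n ≃ Fin k × Fin d}
    (h : theta e = theta e') : ∃ g, e' = act g e := by
  have hval : gridPair e = gridPair e' := congrArg Subtype.val h
  have h2 : ∀ x y : Fin n, (e x).1 = (e y).1 ↔ (e' x).1 = (e' y).1 := by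
    intro x y
    rw [← gridPair_rel2 e x y, hval, gridPair_rel2]
  have h1 : ∀ x y : Fin n, (e x).2 = (e y).2 ↔ (e' x).2 = (e' y).2 := by
    intro x y
    rw [← gridPair_rel1 e x y, hval, gridPair_rel1]
  set s0 : Fin d := ⟨0, hd⟩
  set r0 : Fin k := ⟨0, hk⟩
  set φ : Fin k → Fin k := fun r => (e' (e.symm (r, s0))).1 with hφ
  set ψ : Fin d → Fin d := fun s => (e' (e.symm (r0, s))).2 with hψ
  have hφinj : Function.Injective φ := by
    intro r1 r2 hr
    have := (h2 (e.symm (r1, s0)) (e.symm (r2, s0))).mpr hr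
    simpa using this
  have hψinj : Function.Injective ψ := by
    intro s1 s2 hs
    have := (h1 (e.symm (r0, s1)) (e.symm (r0, s2))).mpr hs
    simpa using this
  have hφbij := Finite.injective_iff_bijective.mp hφinj
  have hψbij := Finite.injective_iff_bijective.mp hψinj
  refine ⟨(Equiv.ofBijective φ hφbij, Equiv.ofBijective ψ hψbij), ?_⟩
  apply Equiv.ext
  intro x
  show e' x = Equiv.prodCongr _ _ (e x)
  have hfst : (e' x).1 = φ (e x).1 := by
    apply (h2 x (e.symm ((e x).1, s0))).mp
    simp
  have hsnd : (e' x).2 = ψ (e x).2 := by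
    apply (h1 x (e.symm (r0, (e x).2))).mp
    simp
  have : Equiv.prodCongr (Equiv.ofBijective φ hφbij) (Equiv.ofBijective ψ hψbij) (e x) =
      (φ (e x).1, ψ (e x).2) := rfl
  rw [this, ← hfst, ← hsnd]

lemma theta_surj (hd : 0 < d) (hk : 0 < k) (hn : n = k * d)
    (x : {x : FactPair (Fin n) // IsNRel d x.1.2}) :
    ∃ e : Fin n ≃ Fin k × Fin d, theta e = x := by
  have hn0 : 0 < n := by rw [hn]; exact Nat.mul_pos hk hd
  set pt : Fin n := ⟨0, hn0⟩
  have hcard2 : Nat.card (cls x.1.1.2 pt) = d := x.2 pt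
  have hcardn : Nat.card (Fin n) = n := by simp
  have hgrid := card_eq_mul x.1 pt
  rw [hcardn, hcard2] at hgrid
  have hcard1 : Nat.card (cls x.1.1.1 pt) = k := by
    have hkd : k * d = Nat.card (cls x.1.1.1 pt) * d := hn.symm.trans hgrid
    exact (Nat.eq_of_mul_eq_mul_right hd hkd.symm)
  have hf1 : Finite (cls x.1.1.1 pt) := Nat.finite_of_card_ne_zero (by omega)
  have hf2 : Finite (cls x.1.1.2 pt) := Nat.finite_of_card_ne_zero (by omega)
  set f1 : cls x.1.1.1 pt ≃ Fin k := Finite.equivFinOfCardEq hcard1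
  set f2 : cls x.1.1.2 pt ≃ Fin d := Finite.equivFinOfCardEq hcard2
  set e : Fin n ≃ Fin k × Fin d := (gridEquiv x.1 pt).trans (Equiv.prodCongr f1 f2)
  refine ⟨e, Subtype.ext ?_⟩
  apply factpair_ext <;> apply setoid_ext' <;> intro a b
  · show (e a).2 = (e b).2 ↔ x.1.1.1 a b
    have : (e a).2 = f2 (gridEquiv x.1 pt a).2 := rfl
    rw [this, show (e b).2 = f2 (gridEquiv x.1 pt b).2 from rfl, f2.injective.eq_iff]
    exact gridEquiv_snd_eq_iff x.1 pt a b
  · show (e a).1 = (e b).1 ↔ x.1.1.2 a b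
    have : (e a).1 = f1 (gridEquiv x.1 pt a).1 := rfl
    rw [this, show (e b).1 = f1 (gridEquiv x.1 pt b).1 from rfl, f1.injective.eq_iff]
    exact gridEquiv_fst_eq_iff x.1 pt a b

theorem card_nrel (hd : 0 < d) (hk : 0 < k) (hn : n = k * d) :
    Nat.card {x : FactPair (Fin n) // IsNRel d x.1.2} *
      (k.factorial * d.factorial) = n.factorial := by
  classical
  set S := {x : FactPair (Fin n) // IsNRel d x.1.2}
  set G := Equiv.Perm (Fin k) × Equiv.Perm (Fin d)
  set sec : S → (Fin n ≃ Fin k × Fin d) := fun x => (theta_surj hd hk hn x).choose with hsec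
  have hsecspec : ∀ x : S, theta (sec x) = x := fun x => (theta_surj hd hk hn x).choose_spec
  have hbij : Function.Bijective (fun p : S × G => act p.2 (sec p.1)) := by
    constructor
    · rintro ⟨x, g⟩ ⟨x', g'⟩ hpq
      simp only at hpq
      have hx : x = x' := by
        have h1 : theta (act g (sec x)) = x := by rw [theta_act]; exact hsecspec x
        have h2 : theta (act g' (sec x')) = x' := by rw [theta_act]; exact hsecspec x'
        rw [← h1, ← h2, hpq]
      subst hx
      have hg : g = g' := by
        have hgg : ∀ z, Equiv.prodCongr g.1 g.2 z = Equiv.prodCongr g'.1 g'.2 z := by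
          intro z
          have hz : ∃ w, sec x w = z := ⟨(sec x).symm z, by simp⟩
          obtain ⟨w, rfl⟩ := hz
          exact congrFun (congrArg (fun (q : Fin n ≃ Fin k × Fin d) => (q : Fin n → Fin k × Fin d)) hpq) w
        have h1 : g.1 = g'.1 := by
          apply Equiv.ext; intro r
          have := hgg (r, ⟨0, hd⟩)
          exact (Prod.ext_iff.mp this).1
        have h2 : g.2 = g'.2 := by
          apply Equiv.ext; intro s
          have := hgg (⟨0, hk⟩, s)
          exact (Prod.ext_iff.mp this).2
        exact Prod.ext h1 h2
      rw [hg]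
    · intro e
      set x := theta e with hx
      have : theta (sec x) = theta e := by rw [hsecspec]
      obtain ⟨g, hg⟩ := theta_rigid hd hk this
      exact ⟨(x, g), hg.symm⟩
  have hcardeq : Nat.card (S × G) = Nat.card (Fin n ≃ Fin k × Fin d) :=
    Nat.card_congr (Equiv.ofBijective _ hbij)
  have hM : Nat.card (Fin n ≃ Fin k × Fin d) = n.factorial := by
    have e0 : Fin n ≃ Fin k × Fin d := by
      rw [hn]
      exact finProdFinEquiv.symm
    rw [Nat.card_eq_fintype_card, Fintype.card_equiv e0]
    simp
  have hG : Nat.card G = k.factorial * d.factorial := by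
    rw [Nat.card_prod, Nat.card_eq_fintype_card, Nat.card_eq_fintype_card,
      Fintype.card_perm, Fintype.card_perm]
    simp
  rw [Nat.card_prod, hG, hM] at hcardeq
  exact hcardeq

end Counting
end FactProof
namespace FactProof

instance setoidFinite {B : Type*} [Finite B] : Finite (Setoid B) :=
  Finite.of_injective (fun s : Setoid B => (s.r : B → B → Prop)) (by
    intro s t h
    apply Setoid.ext
    intro x y
    have h2 : s.r x y ↔ t.r x y := by rw [show s.r = t.r from h]
    exact h2)

instance factPairFinite {B : Type*} [Finite B] : Finite (FactPair B) :=
  inferInstanceAs (Finite {p : Setoid B × Setoid B // IsFactorPair p.1 p.2})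

/-- Number of atoms of `Fact(Fin m)`. -/
noncomputable def AC (m : ℕ) : ℕ := Nat.card {x : FactPair (Fin m) // IsFactAtom x}

/-- Number of elements of `Fact(Fin m)` whose second relation is an `r`-relation. -/
noncomputable def ND (m r : ℕ) : ℕ := Nat.card {x : FactPair (Fin m) // IsNRel r x.1.2}

lemma ND_eval {m r k : ℕ} (hr : 0 < r) (hk : 0 < k) (hm : m = k * r) :
    ND m r * (k.factorial * r.factorial) = m.factorial := card_nrel hr hk hm

lemma nrel_dvd_card {m p : ℕ} (hm : 0 < m) (x : FactPair (Fin m))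
    (h : IsNRel p x.1.2) : p ∣ m := by
  have grid := card_eq_mul x ⟨0, hm⟩
  rw [Nat.card_eq_fintype_card, Fintype.card_fin, h ⟨0, hm⟩] at grid
  exact Dvd.intro_left _ grid.symm

lemma nrel_le_atoms {m r : ℕ} (hr : Nat.Prime r) (hm : 0 < m) : ND m r ≤ AC m := by
  apply Nat.card_le_card_of_injective
    (fun x => (⟨x.1, (atom_iff_prime x.1 ⟨0, hm⟩).mpr ⟨r, hr, x.2⟩⟩ :
      {x : FactPair (Fin m) // IsFactAtom x}))
  intro a b hab
  apply Subtype.ext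
  have h2 := congrArg Subtype.val hab
  exact h2

noncomputable def orSplit {α : Type*} (p q : α → Prop) (h : ∀ x, ¬(p x ∧ q x)) :
    {x // p x ∨ q x} ≃ {x // p x} ⊕ {x // q x} := by
  classical
  exact
  { toFun := fun x => if hp : p x.1 then Sum.inl ⟨x.1, hp⟩
      else Sum.inr ⟨x.1, x.2.resolve_left hp⟩
    invFun := fun y => Sum.rec (fun a => ⟨a.1, Or.inl a.2⟩) (fun a => ⟨a.1, Or.inr a.2⟩) y
    left_inv := fun x => by
      by_cases hp : p x.1
      · simp [hp]
      · simp [hp]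
    right_inv := fun y => by
      rcases y with a | a
      · simp [a.2]
      · have : ¬ p a.1 := fun hp => h a.1 ⟨hp, a.2⟩
        simp [this] }

lemma AC_four : AC 4 = 6 := by
  have hiff : ∀ x : FactPair (Fin 4), IsFactAtom x ↔ IsNRel 2 x.1.2 := by
    intro x
    constructor
    · intro h
      obtain ⟨p, hp, hrel⟩ := (atom_iff_prime x ⟨0, by norm_num⟩).mp h
      have hdvd : p ∣ 4 := nrel_dvd_card (by norm_num) x hrel
      have hp2 : p = 2 := by
        have : p ∣ 2 * 2 := by norm_num at hdvd ⊢; exact hdvd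
        rcases (Nat.Prime.dvd_mul hp).mp this with h2 | h2 <;>
          exact (Nat.prime_dvd_prime_iff_eq hp Nat.prime_two).mp h2
      rwa [hp2] at hrel
    · intro h
      exact (atom_iff_prime x ⟨0, by norm_num⟩).mpr ⟨2, Nat.prime_two, h⟩
  have hAC : AC 4 = ND 4 2 :=
    Nat.card_congr (Equiv.subtypeEquivRight hiff)
  have h := ND_eval (m := 4) (r := 2) (k := 2) (by norm_num) (by norm_num) (by norm_num)
  norm_num [Nat.factorial] at h
  rw [hAC]
  omega

lemma AC_odd {q : ℕ} (hq : Nat.Prime q) (hodd : q ≠ 2) :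
    AC (q * 2) * q.factorial = (q * 2).factorial := by
  have hq0 : 0 < q := hq.pos
  have hm0 : 0 < q * 2 := by omega
  have hiff : ∀ x : FactPair (Fin (q * 2)),
      IsFactAtom x ↔ (IsNRel 2 x.1.2 ∨ IsNRel q x.1.2) := by
    intro x
    constructor
    · intro h
      obtain ⟨p, hp, hrel⟩ := (atom_iff_prime x ⟨0, hm0⟩).mp h
      have hdvd : p ∣ q * 2 := nrel_dvd_card hm0 x hrel
      rcases (Nat.Prime.dvd_mul hp).mp hdvd with h2 | h2
      · right
        rwa [(Nat.prime_dvd_prime_iff_eq hp hq).mp h2] at hrel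
      · left
        rwa [(Nat.prime_dvd_prime_iff_eq hp Nat.prime_two).mp h2] at hrel
    · rintro (h | h)
      · exact (atom_iff_prime x ⟨0, hm0⟩).mpr ⟨2, Nat.prime_two, h⟩
      · exact (atom_iff_prime x ⟨0, hm0⟩).mpr ⟨q, hq, h⟩
  have hdisj : ∀ x : FactPair (Fin (q * 2)), ¬(IsNRel 2 x.1.2 ∧ IsNRel q x.1.2) := by
    rintro x ⟨h2, hqq⟩
    exact hodd (isNRel_unique ⟨0, hm0⟩ hqq h2)
  have hAC : AC (q * 2) = ND (q * 2) 2 + ND (q * 2) q := by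
    rw [show AC (q * 2) = Nat.card {x : FactPair (Fin (q * 2)) //
        IsNRel 2 x.1.2 ∨ IsNRel q x.1.2} from
      Nat.card_congr (Equiv.subtypeEquivRight hiff)]
    rw [Nat.card_congr (orSplit _ _ hdisj), Nat.card_sum]
    rfl
  have h2 : ND (q * 2) 2 * (q.factorial * Nat.factorial 2) = (q * 2).factorial :=
    ND_eval (by norm_num) hq0 rfl
  have hqe : ND (q * 2) q * (Nat.factorial 2 * q.factorial) = (q * 2).factorial :=
    ND_eval hq0 (by norm_num) (by rw [mul_comm])
  have heq : ND (q * 2) 2 = ND (q * 2) q := by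
    rw [mul_comm (Nat.factorial 2) q.factorial] at hqe
    have := h2.trans hqe.symm
    exact Nat.eq_of_mul_eq_mul_right (by positivity) this
  rw [hAC, heq, ← two_mul]
  calc 2 * ND (q * 2) q * q.factorial
      = ND (q * 2) q * (Nat.factorial 2 * q.factorial) := by
        rw [show Nat.factorial 2 = 2 from rfl]; ring
  _ = (q * 2).factorial := hqe

lemma fact_eq_mul_prod (m j : ℕ) :
    (m + j).factorial = m.factorial * ∏ i ∈ Finset.range j, (m + 1 + i) := by
  induction j with
  | zero => simp
  | succ j ih =>
    rw [show m + (j + 1) = (m + j) + 1 from rfl, Nat.factorial_succ, ih,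
      Finset.prod_range_succ]
    ring

lemma AC_le_step {q s : ℕ} (hq : Nat.Prime q) (hs : 2 ≤ s) :
    AC (q * 2) ≤ AC (q * s) := by
  rcases eq_or_lt_of_le hs with rfl | hs3
  · exact le_refl _
  have hs3 : 3 ≤ s := hs3
  have hq0 : 0 < q := hq.pos
  have hfactineq : AC (q * 2) * (s.factorial * q.factorial) ≤ (q * s).factorial := by
    rcases eq_or_ne q 2 with rfl | hodd
    · rw [AC_four]
      have h1 : 6 * (s.factorial * Nat.factorial 2) = 12 * s.factorial := by
        rw [show Nat.factorial 2 = 2 from rfl]; ring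
      rw [h1]
      have h2 : 12 * s.factorial ≤ (s + 3).factorial := by
        rw [fact_eq_mul_prod s 3]
        have : 12 ≤ ∏ i ∈ Finset.range 3, (s + 1 + i) := by
          rw [Finset.prod_range_succ, Finset.prod_range_succ, Finset.prod_range_succ,
            Finset.prod_range_zero]
          have h4 : 4 ≤ s + 1 := by omega
          have h5 : 5 ≤ s + 2 := by omega
          have h6 : 6 ≤ s + 3 := by omega
          calc (12 : ℕ) ≤ 4 * (5 * 6) := by norm_num
          _ ≤ (s + 1) * ((s + 2) * (s + 3)) := Nat.mul_le_mul h4 (Nat.mul_le_mul h5 h6)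
          _ = 1 * (s + 1 + 0) * (s + 1 + 1) * (s + 1 + 2) := by ring
        calc 12 * s.factorial ≤ (∏ i ∈ Finset.range 3, (s + 1 + i)) * s.factorial :=
              Nat.mul_le_mul_right _ this
        _ = s.factorial * ∏ i ∈ Finset.range 3, (s + 1 + i) := by ring
      refine h2.trans (Nat.factorial_le (by omega))
    · have hq3 : 3 ≤ q := by
        rcases hq.two_le.lt_or_eq with h | h
        · omega
        · exact absurd h.symm hodd
      have hkey : AC (q * 2) * q.factorial = (q * 2).factorial := AC_odd hq hodd
      have h1 : AC (q * 2) * (s.factorial * q.factorial) =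
          (q * 2).factorial * s.factorial := by
        rw [← hkey]; ring
      rw [h1]
      have h2 : (q * 2).factorial * s.factorial ≤ (q * 2 + s).factorial :=
        Nat.le_of_dvd (Nat.factorial_pos _)
          (Nat.factorial_mul_factorial_dvd_factorial_add _ _)
      refine h2.trans (Nat.factorial_le ?_)
      nlinarith
  have hnd : ND (q * s) q * (s.factorial * q.factorial) = (q * s).factorial :=
    ND_eval hq0 (by omega) (by rw [mul_comm])
  have hle1 : AC (q * 2) ≤ ND (q * s) q := by
    have := hfactineq
    rw [← hnd] at this
    exact Nat.le_of_mul_le_mul_right this (by positivity)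
  exact hle1.trans (nrel_le_atoms hq (by positivity))

lemma AC_strict_mono {q q' : ℕ} (hq : Nat.Prime q) (hq' : Nat.Prime q') (h : q < q') :
    AC (q * 2) < AC (q' * 2) := by
  have hq'3 : 3 ≤ q' := by
    have := hq.two_le
    omega
  have hodd' : q' ≠ 2 := by omega
  have hkey' : AC (q' * 2) * q'.factorial = (q' * 2).factorial := AC_odd hq' hodd'
  rcases eq_or_ne q 2 with rfl | hodd
  · rw [AC_four]
    -- show 6 < AC (q' * 2)
    have h7 : 7 * q'.factorial ≤ (q' * 2).factorial := by
      have h2 : (q' + 3).factorial ≤ (q' * 2).factorial := Nat.factorial_le (by omega)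
      refine le_trans ?_ h2
      rw [fact_eq_mul_prod q' 3]
      have : 7 ≤ ∏ i ∈ Finset.range 3, (q' + 1 + i) := by
        rw [Finset.prod_range_succ, Finset.prod_range_succ, Finset.prod_range_succ,
          Finset.prod_range_zero]
        have h4 : 4 ≤ q' + 1 := by omega
        have h5 : 5 ≤ q' + 2 := by omega
        have h6 : 6 ≤ q' + 3 := by omega
        calc (7 : ℕ) ≤ 4 * (5 * 6) := by norm_num
        _ ≤ (q' + 1) * ((q' + 2) * (q' + 3)) := Nat.mul_le_mul h4 (Nat.mul_le_mul h5 h6)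
        _ = 1 * (q' + 1 + 0) * (q' + 1 + 1) * (q' + 1 + 2) := by ring
      calc 7 * q'.factorial ≤ (∏ i ∈ Finset.range 3, (q' + 1 + i)) * q'.factorial :=
            Nat.mul_le_mul_right _ this
      _ = q'.factorial * ∏ i ∈ Finset.range 3, (q' + 1 + i) := by ring
    have : 7 * q'.factorial ≤ AC (q' * 2) * q'.factorial := by rw [hkey']; exact h7
    have h8 := Nat.le_of_mul_le_mul_right this (Nat.factorial_pos q')
    omega
  · have hq3 : 3 ≤ q := by
      have := hq.two_le
      omega
    have hkey : AC (q * 2) * q.factorial = (q * 2).factorial := AC_odd hq hodd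
    have hP : (∏ i ∈ Finset.range q, (q + 1 + i)) < ∏ i ∈ Finset.range q', (q' + 1 + i) := by
      have hstep1 : (∏ i ∈ Finset.range q, (q + 1 + i)) <
          ∏ i ∈ Finset.range q, (q' + 1 + i) := by
        apply Finset.prod_lt_prod_of_nonempty
        · intro i _; omega
        · intro i _; omega
        · exact Finset.nonempty_range_iff.mpr (by omega)
      refine hstep1.trans_le ?_
      apply Finset.prod_le_prod_of_subset_of_one_le'
      · exact Finset.range_subset_range.mpr h.le
      · intro i _ _; omega
    have hgoal : AC (q * 2) * (q.factorial * q'.factorial) <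
        AC (q' * 2) * (q.factorial * q'.factorial) := by
      have e1 : AC (q * 2) * (q.factorial * q'.factorial) =
          (q * 2).factorial * q'.factorial := by rw [← hkey]; ring
      have e2 : AC (q' * 2) * (q.factorial * q'.factorial) =
          (q' * 2).factorial * q.factorial := by rw [← hkey']; ring
      rw [e1, e2, show q * 2 = q + q by ring, show q' * 2 = q' + q' by ring,
        fact_eq_mul_prod q q, fact_eq_mul_prod q' q']
      calc q.factorial * (∏ i ∈ Finset.range q, (q + 1 + i)) * q'.factorial
          = (q.factorial * q'.factorial) * (∏ i ∈ Finset.range q, (q + 1 + i)) := by ring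
        _ < (q.factorial * q'.factorial) * (∏ i ∈ Finset.range q', (q' + 1 + i)) :=
            mul_lt_mul_of_pos_left hP (by positivity)
        _ = q'.factorial * (∏ i ∈ Finset.range q', (q' + 1 + i)) * q.factorial := by ring
    exact Nat.lt_of_mul_lt_mul_right hgoal

lemma AC_inj {q q' : ℕ} (hq : Nat.Prime q) (hq' : Nat.Prime q')
    (h : AC (q * 2) = AC (q' * 2)) : q = q' := by
  rcases lt_trichotomy q q' with hlt | heq | hlt
  · exact absurd h (AC_strict_mono hq hq' hlt).ne
  · exact heq
  · exact absurd h.symm (AC_strict_mono hq' hq hlt).ne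

lemma AC_pos {q : ℕ} (hq : Nat.Prime q) : AC (q * 2) ≠ 0 := by
  have hm0 : 0 < q * 2 := by have := hq.pos; omega
  have e : Fin (q * 2) ≃ Fin 2 × Fin q :=
    (finCongr (mul_comm q 2)).trans finProdFinEquiv.symm
  have hatom : IsFactAtom (gridPair e) := by
    apply (atom_iff_prime (gridPair e) ⟨0, hm0⟩).mpr
    refine ⟨q, hq, ?_⟩
    have := gridPair_isNRel e
    simpa using this
  rw [AC]
  rw [Nat.card_ne_zero]
  exact ⟨⟨⟨gridPair e, hatom⟩⟩, inferInstance⟩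

end FactProof
namespace FactProof

variable {B B' : Type*}

section OrderIso

variable (F : FactPair B ≃ FactPair B')

lemma hle_symm (hle : ∀ a b : FactPair B, FactLE a b ↔ FactLE (F a) (F b)) :
    ∀ a b : FactPair B', FactLE a b ↔ FactLE (F.symm a) (F.symm b) := by
  intro a b
  rw [hle (F.symm a) (F.symm b), Equiv.apply_symm_apply, Equiv.apply_symm_apply]

lemma orderIso_zero (hle : ∀ a b : FactPair B, FactLE a b ↔ FactLE (F a) (F b)) :
    F (FactZero B) = FactZero B' := by
  apply factLE_antisymm
  · have := (hle (FactZero B) (F.symm (FactZero B'))).mp (factZero_le _)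
    rwa [Equiv.apply_symm_apply] at this
  · exact factZero_le _

lemma orderIso_atom_iff (hle : ∀ a b : FactPair B, FactLE a b ↔ FactLE (F a) (F b))
    (t : FactPair B) : IsFactAtom t ↔ IsFactAtom (F t) := by
  have hz := orderIso_zero F hle
  have hz' : F.symm (FactZero B') = FactZero B := by
    rw [← hz, Equiv.symm_apply_apply]
  constructor
  · intro h
    constructor
    · refine ⟨factZero_le _, fun h0 => ?_⟩
      apply h.1.2
      have : F.symm (FactZero B') = F.symm (F t) := by rw [h0]
      rwa [hz', Equiv.symm_apply_apply] at this
    · intro m hm0 hmt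
      refine h.2 (F.symm m) ⟨factZero_le _, fun h0 => ?_⟩
        ⟨?_, fun h1 => ?_⟩
      · apply hm0.2
        have : F (FactZero B) = F (F.symm m) := by rw [h0]
        rwa [hz, Equiv.apply_symm_apply] at this
      · have := (hle_symm F hle m (F t)).mp hmt.1
        rwa [Equiv.symm_apply_apply] at this
      · apply hmt.2
        have : F (F.symm m) = F t := by rw [h1]
        rwa [Equiv.apply_symm_apply] at this
  · intro h
    constructor
    · refine ⟨factZero_le _, fun h0 => ?_⟩
      apply h.1.2
      rw [← h0, hz]
    · intro y hy0 hyt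
      refine h.2 (F y) ⟨factZero_le _, fun h0 => ?_⟩
        ⟨(hle y t).mp hyt.1, fun h1 => ?_⟩
      · exact hy0.2 (F.injective (by rw [← h0, hz]))
      · exact hyt.2 (F.injective h1)

/-- The number of atoms below an element. -/
noncomputable def Count {B : Type*} (u : FactPair B) : ℕ :=
  Nat.card {x : FactPair B // IsFactAtom x ∧ FactLE x u}

lemma count_map (hle : ∀ a b : FactPair B, FactLE a b ↔ FactLE (F a) (F b))
    (u : FactPair B) : Count u = Count (F u) := by
  apply Nat.card_congr
  exact F.subtypeEquiv fun x =>
    and_congr (orderIso_atom_iff F hle x) (hle x u)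

end OrderIso

section CountEval

lemma count_eval (u : FactPair B) (b0 : B) {M : ℕ} (hM : IsNRel M u.1.2) (hM0 : 0 < M) :
    Count u = AC M := by
  have hcard : Nat.card (cls (FactPerp u).1.1 b0) = M := hM b0
  have hfin : Finite (cls (FactPerp u).1.1 b0) := Nat.finite_of_card_ne_zero (by omega)
  have eC : cls (FactPerp u).1.1 b0 ≃ Fin M := Finite.equivFinOfCardEq hcard
  have E1 := atomsBelowEquiv (downEquiv u b0) (downEquiv_le_iff u b0) (downEquiv_zero u b0)
  have E2 := mapAtomsEquiv eC
  rw [Count, Nat.card_congr (E1.trans E2)]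
  rfl

/-- Atoms below an element with infinite classes are infinitely many. -/
lemma count_zero_of_infinite (u : FactPair B) (b0 : B)
    (hinf : Infinite (cls (FactPerp u).1.1 b0)) : Count u = 0 := by
  set C := cls (FactPerp u).1.1 b0
  -- infinitely many atoms of Fact C
  classical
  have hatoms : Infinite {m : FactPair C // IsFactAtom m} := by
    have hcard : Cardinal.mk C = Cardinal.mk (C × ULift Bool) := by
      rw [Cardinal.mk_prod, Cardinal.lift_id, Cardinal.lift_id]
      have h2 : Cardinal.mk (ULift Bool) = 2 := by simp
      rw [h2]
      exact (Cardinal.mul_eq_left (Cardinal.aleph0_le_mk C)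
        (le_trans (le_of_lt (by exact_mod_cast Cardinal.nat_lt_aleph0 2))
          (Cardinal.aleph0_le_mk C)) (by norm_num)).symm
    obtain ⟨e⟩ := Cardinal.eq.mp hcard
    obtain ⟨d0⟩ : Nonempty C := ⟨⟨b0, (FactPerp u).1.1.refl' b0⟩⟩
    set P : C → FactPair C := fun d =>
      gridPair (e.trans (Equiv.swap (d0, ULift.up true) (d, ULift.up true))) with hP
    have hPatom : ∀ d, IsFactAtom (P d) := by
      intro d
      apply (atom_iff_prime (P d) d0).mpr
      refine ⟨2, Nat.prime_two, ?_⟩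
      have := gridPair_isNRel (e.trans (Equiv.swap (d0, ULift.up true) (d, ULift.up true)))
      simpa using this
    have key : ∀ dd d : C, (P dd).1.2 (e.symm (d0, ULift.up true))
        (e.symm (d, ULift.up false)) ↔ dd = d := by
      intro dd d
      rw [hP]
      rw [gridPair_rel2]
      simp only [Equiv.trans_apply, Equiv.apply_symm_apply]
      rw [Equiv.swap_apply_left,
        Equiv.swap_apply_of_ne_of_ne (by simp) (by simp)]
    have hPinj : Function.Injective P := by
      intro d d' hdd
      have h1 : (P d).1.2 (e.symm (d0, ULift.up true)) (e.symm (d, ULift.up false)) :=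
        (key d d).mpr rfl
      rw [hdd] at h1
      exact ((key d' d).mp h1).symm
    exact Infinite.of_injective (fun d => ⟨P d, hPatom d⟩)
      (fun d d' h => hPinj (congrArg Subtype.val h))
  have E1 := atomsBelowEquiv (downEquiv u b0) (downEquiv_le_iff u b0) (downEquiv_zero u b0)
  have : Infinite {x : FactPair B // IsFactAtom x ∧ FactLE x u} := Equiv.infinite_iff E1 |>.mpr hatoms
  exact Nat.card_eq_zero_of_infinite

end CountEval

section Exists

lemma exists_nrel [Infinite B] {n : ℕ} (hn : 0 < n) :
    ∃ u : FactPair B, IsNRel n u.1.2 := by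
  have hcard : Cardinal.mk B = Cardinal.mk (B × ULift (Fin n)) := by
    rw [Cardinal.mk_prod, Cardinal.lift_id, Cardinal.lift_id]
    have h2 : Cardinal.mk (ULift (Fin n)) = n := by simp
    rw [h2]
    refine (Cardinal.mul_eq_left (Cardinal.aleph0_le_mk B) ?_ ?_).symm
    · exact le_trans (Cardinal.nat_lt_aleph0 n).le (Cardinal.aleph0_le_mk B)
    · exact_mod_cast hn.ne'
  obtain ⟨e⟩ := Cardinal.eq.mp hcard
  refine ⟨gridPair e, ?_⟩
  have := gridPair_isNRel e
  have hcn : Nat.card (ULift (Fin n)) = n := by simp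
  rwa [hcn] at this

lemma infinite_cls1 [Infinite B] (t : FactPair B) {q : ℕ} (hq : 0 < q)
    (hrel : IsNRel q t.1.2) (x : B) : Infinite (cls t.1.1 x) := by
  by_contra hfin
  rw [not_infinite_iff_finite] at hfin
  have hfin2 : Finite (cls t.1.2 x) := Nat.finite_of_card_ne_zero (by rw [hrel x]; omega)
  have := Finite.of_equiv _ (gridEquiv t x).symm
  exact absurd this (by rw [← not_infinite_iff_finite]; simp [not_not]; infer_instance)

lemma exists_extension [Infinite B] (a : FactPair B) (b0 : B) {q : ℕ} (hq : 0 < q)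
    (ha : IsNRel q a.1.2) :
    ∃ u : FactPair B, FactLT a u ∧ IsNRel (q * 2) u.1.2 := by
  have hinf : Infinite (cls a.1.1 b0) := infinite_cls1 a hq ha b0
  obtain ⟨w, hw⟩ := exists_nrel (B := cls a.1.1 b0) (n := 2) (by norm_num)
  refine ⟨ofSub a b0 w, ⟨le_ofSub a b0 w, ?_⟩, ?_⟩
  · intro h
    have h2 : IsNRel (q * 2) (ofSub a b0 w).1.2 := by
      apply isNRel_up a b0 (le_ofSub a b0 w) ha
      rw [toSub_ofSub]
      exact hw
    rw [← h] at h2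
    have := isNRel_unique b0 ha h2
    omega
  · apply isNRel_up a b0 (le_ofSub a b0 w) ha
    rw [toSub_ofSub]
    exact hw

end Exists
end FactProof
namespace FactProof

universe u

variable {B B' : Type*}

lemma count_lb {q : ℕ} (hq : Nat.Prime q) {a w : FactPair B} (b0 : B)
    (ha : IsNRel q a.1.2) (hlt : FactLT a w) (hC : Count w ≠ 0) :
    AC (q * 2) ≤ Count w := by
  by_cases hinf : Infinite (cls (FactPerp w).1.1 b0)
  · rw [count_zero_of_infinite w b0 hinf] at hC; exact absurd rfl hC
  have hfin : Finite (cls (FactPerp w).1.1 b0) := not_infinite_iff_finite.mp hinf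
  haveI : Nonempty (cls (FactPerp w).1.1 b0) := ⟨⟨b0, (FactPerp w).1.1.refl' b0⟩⟩
  set M := Nat.card (cls (FactPerp w).1.1 b0) with hM
  have hM0 : 0 < M := Nat.card_pos
  have hMrel : IsNRel M w.1.2 := (isNRel2_iff_point w b0).mpr rfl
  have hcount : Count w = AC M := count_eval w b0 hMrel hM0
  set E := downEquiv w b0 with hE
  set m := E ⟨a, hlt.1⟩ with hm
  have hmrel : IsNRel q m.1.2 := (downEquiv_isNRel_iff w b0 ⟨a, hlt.1⟩ q).mpr ha
  set pt : cls (FactPerp w).1.1 b0 := ⟨b0, (FactPerp w).1.1.refl' b0⟩ with hpt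
  have hgrid := card_eq_mul m pt
  rw [hmrel pt] at hgrid
  set s := Nat.card (cls m.1.1 pt) with hs
  have hs2 : 2 ≤ s := by
    have hs0 : s ≠ 0 := by
      intro h0
      rw [h0, zero_mul] at hgrid
      omega
    have hs1 : s ≠ 1 := by
      intro h1
      have hrel1 : IsNRel 1 m.1.1 := (isNRel1_iff_point m pt).mpr (by rw [← hs, h1])
      have hone : m = FactOne _ := isNRel_one_fst m hrel1
      have heq : E ⟨a, hlt.1⟩ = E ⟨w, factLE_refl w⟩ := by
        rw [← hm, hone, downEquiv_self]
      exact hlt.2 (congrArg Subtype.val (E.injective heq))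
    omega
  rw [hcount, show M = s * q from hgrid, mul_comm s q]
  exact AC_le_step hq hs2

theorem key : ∀ n : ℕ, 0 < n → ∀ {B B' : Type u} (_ : Infinite B) (_ : Infinite B')
    (F : FactPair B ≃ FactPair B')
    (_ : ∀ x y : FactPair B, FactLE x y ↔ FactLE (F x) (F y))
    (t : FactPair B), IsNRel n t.1.2 → IsNRel n (F t).1.2 := by
  intro n
  induction n using Nat.strong_induction_on with
  | _ n IH =>
    intro hn B B' hB hB' F hle t ht
    haveI := hB; haveI := hB'
    obtain ⟨b0⟩ : Nonempty B := inferInstance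
    obtain ⟨b0'⟩ : Nonempty B' := inferInstance
    rcases eq_or_ne n 1 with rfl | hn1
    · have hz : t = FactZero B := isNRel_one_snd t ht
      rw [hz, orderIso_zero F hle]
      exact isNRel_one_zero
    by_cases hprime : Nat.Prime n
    · -- prime case
      have hatom : IsFactAtom t := (atom_iff_prime t b0).mpr ⟨n, hprime, ht⟩
      have hatom' : IsFactAtom (F t) := (orderIso_atom_iff F hle t).mp hatom
      obtain ⟨q', hq', hrel'⟩ := (atom_iff_prime (F t) b0').mp hatom'
      obtain ⟨w, hwlt, hwrel⟩ := exists_extension t b0 hprime.pos ht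
      have hcw : Count w = AC (n * 2) :=
        count_eval w b0 hwrel (by have := hprime.pos; omega)
      have hcFw : Count (F w) = AC (n * 2) := by
        rw [← count_map F hle w]; exact hcw
      have hFlt : FactLT (F t) (F w) :=
        ⟨(hle t w).mp hwlt.1, fun h => hwlt.2 (F.injective h)⟩
      have h1 : AC (q' * 2) ≤ AC (n * 2) := by
        rw [← hcFw]
        exact count_lb hq' b0' hrel' hFlt (by rw [hcFw]; exact AC_pos hprime)
      obtain ⟨w', hwlt', hwrel'⟩ := exists_extension (F t) b0' hq'.pos hrel'
      have hcw' : Count w' = AC (q' * 2) :=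
        count_eval w' b0' hwrel' (by have := hq'.pos; omega)
      have hcFw' : Count (F.symm w') = AC (q' * 2) := by
        rw [count_map F hle (F.symm w'), Equiv.apply_symm_apply]; exact hcw'
      have hlt2 : FactLT t (F.symm w') := by
        constructor
        · have := (hle_symm F hle (F t) w').mp hwlt'.1
          rwa [Equiv.symm_apply_apply] at this
        · intro h
          apply hwlt'.2
          rw [h, Equiv.apply_symm_apply]
      have h2 : AC (n * 2) ≤ AC (q' * 2) := by
        rw [← hcFw']
        exact count_lb hprime b0 ht hlt2 (by rw [hcFw']; exact AC_pos hq')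
      have hq'n : q' = n := AC_inj hq' hprime (le_antisymm h1 h2)
      rwa [hq'n] at hrel'
    · -- composite case
      set p := n.minFac with hp
      have hp_prime : Nat.Prime p := Nat.minFac_prime hn1
      set k := n / p with hk
      have hn2 : 2 ≤ n := by omega
      have hfact : n = p * k := (Nat.mul_div_cancel' (Nat.minFac_dvd n)).symm
      have hk0 : 0 < k := Nat.div_pos (Nat.minFac_le (by omega)) (Nat.minFac_pos n)
      have hk1 : k ≠ 1 := by
        intro h1
        rw [h1, mul_one] at hfact
        rw [hfact] at hprime
        exact hprime hp_prime
      have hklt : k < n := Nat.div_lt_self (by omega) hp_prime.one_lt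
      have hplt : p < n :=
        lt_of_le_of_ne (Nat.minFac_le (by omega)) (fun h => hprime (h ▸ hp_prime))
      have hC : Nat.card (cls (FactPerp t).1.1 b0) = n := ht b0
      haveI hfinC : Finite (cls (FactPerp t).1.1 b0) :=
        Nat.finite_of_card_ne_zero (by omega)
      have e0 : cls (FactPerp t).1.1 b0 ≃ Fin (k * p) :=
        Finite.equivFinOfCardEq (by rw [hC, hfact]; ring)
      have e : cls (FactPerp t).1.1 b0 ≃ Fin k × Fin p := e0.trans finProdFinEquiv.symm
      set m := gridPair e with hmdef
      have hmrel : IsNRel p m.1.2 := by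
        have := gridPair_isNRel e
        simpa using this
      set v := (downEquiv t b0).symm m with hv
      have hvle : FactLE v.1 t := v.2
      have hvrel : IsNRel p v.1.1.2 := by
        apply (downEquiv_isNRel_iff t b0 v p).mp
        rw [hv, Equiv.apply_symm_apply]
        exact hmrel
      have hFvrel : IsNRel p (F v.1).1.2 := IH p hplt hp_prime.pos hB hB' F hle v.1 hvrel
      have hurel : IsNRel k (toSub v.1 b0 t hvle).1.2 :=
        isNRel_down v.1 b0 hvle ht hvrel hp_prime.pos hfact
      have hFvle : FactLE (F v.1) (F t) := (hle v.1 t).mp hvle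
      set SE : {w : FactPair B // FactLE v.1 w} ≃ {w' : FactPair B' // FactLE (F v.1) w'} :=
        { toFun := fun w => ⟨F w.1, (hle v.1 w.1).mp w.2⟩
          invFun := fun w' => ⟨F.symm w'.1, by
            have := (hle_symm F hle (F v.1) w'.1).mp w'.2
            rwa [Equiv.symm_apply_apply] at this⟩
          left_inv := fun w => Subtype.ext (F.symm_apply_apply w.1)
          right_inv := fun w' => Subtype.ext (F.apply_symm_apply w'.1) } with hSE
      set G : FactPair (cls v.1.1.1 b0) ≃ FactPair (cls (F v.1).1.1 b0') :=
        ((upEquiv v.1 b0).symm.trans SE).trans (upEquiv (F v.1) b0') with hG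
      have hGle : ∀ x y, FactLE x y ↔ FactLE (G x) (G y) := by
        intro x y
        have e1 := upEquiv_le_iff v.1 b0 ((upEquiv v.1 b0).symm x) ((upEquiv v.1 b0).symm y)
        rw [Equiv.apply_symm_apply, Equiv.apply_symm_apply] at e1
        have e2 := hle ((upEquiv v.1 b0).symm x).1 ((upEquiv v.1 b0).symm y).1
        have e3 := upEquiv_le_iff (F v.1) b0' (SE ((upEquiv v.1 b0).symm x))
          (SE ((upEquiv v.1 b0).symm y))
        exact e1.symm.trans (e2.trans e3)
      haveI hinfB2 : Infinite (cls v.1.1.1 b0) := infinite_cls1 v.1 hp_prime.pos hvrel b0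
      haveI hinfB2' : Infinite (cls (F v.1).1.1 b0') :=
        infinite_cls1 (F v.1) hp_prime.pos hFvrel b0'
      have hGk : IsNRel k (G (toSub v.1 b0 t hvle)).1.2 :=
        IH k hklt hk0 hinfB2 hinfB2' G hGle _ hurel
      have hGt : G (toSub v.1 b0 t hvle) = toSub (F v.1) b0' (F t) hFvle := by
        show (upEquiv (F v.1) b0') (SE ((upEquiv v.1 b0).symm (toSub v.1 b0 t hvle))) = _
        have h1 : (upEquiv v.1 b0).symm (toSub v.1 b0 t hvle) = ⟨t, hvle⟩ := by
          apply (upEquiv v.1 b0).injective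
          rw [Equiv.apply_symm_apply]
          rfl
        rw [h1]
        rfl
      rw [hGt] at hGk
      have hfinal := isNRel_up (F v.1) b0' hFvle hFvrel hGk
      rwa [← hfact] at hfinal

end FactProof

/-- Let `X` be infinite, `α` an automorphism of `Fact X`, and `(θ,θ')` a factor pair
with `α(θ,θ') = (γ,γ')`. For all positive `m, n`: `θ` is an `m`-relation iff `γ` is,
and `θ'` is an `n`-relation iff `γ'` is. -/
theorem factAut_preserves_nRelations (X : Type*) [Infinite X]
    (α : FactPair X → FactPair X) (hα : IsFactAut α) (t : FactPair X)
    (m n : ℕ) (hm : 0 < m) (hn : 0 < n) :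
    (IsNRel m t.1.1 ↔ IsNRel m (α t).1.1) ∧
    (IsNRel n t.1.2 ↔ IsNRel n (α t).1.2) := by
  obtain ⟨hbij, hle, hperp⟩ := hα
  set E : FactPair X ≃ FactPair X := Equiv.ofBijective α hbij with hE
  have hleE : ∀ x y : FactPair X, FactLE x y ↔ FactLE (E x) (E y) := hle
  have hleE' := FactProof.hle_symm E hleE
  constructor
  · constructor
    · intro h
      have h' : IsNRel m (FactPerp t).1.2 := h
      have h2 := FactProof.key m hm inferInstance inferInstance E hleE (FactPerp t) h'
      have he : E (FactPerp t) = FactPerp (α t) := hperp t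
      rw [he] at h2
      exact h2
    · intro h
      have h' : IsNRel m (FactPerp (α t)).1.2 := h
      rw [← hperp t] at h'
      have h2 := FactProof.key m hm inferInstance inferInstance E.symm hleE'
        (E (FactPerp t)) h'
      rw [Equiv.symm_apply_apply] at h2
      exact h2
  · constructor
    · intro h
      exact FactProof.key n hn inferInstance inferInstance E hleE t h
    · intro h
      have h2 := FactProof.key n hn inferInstance inferInstance E.symm hleE' (E t) h
      rwa [Equiv.symm_apply_apply] at h2
end

section
/- Let (θ,θ') and (φ,φ') be factor pairs of a set X such that X/θ is equinumerous with X/φ and X/θ' is equinumerous with X/φ'. Then there is a permutation σ of X with σ(θ) = φ and σ(θ') = φ'. Moreover, any two factor pairs (θ,θ') and (θ,θ'') with the same first component satisfy these cardinality conditions, and in that case σ can be chosen so that additionally (x,σ(x)) ∈ θ for every x ∈ X. -/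
/-! A factor pair `(θ, θ')` identifies `X` with `X/θ × X/θ'` via `x ↦ ([x]θ, [x]θ')`, so
bijections `X/θ ≃ X/φ` and `X/θ' ≃ X/φ'` assemble into a permutation of `X` carrying `θ` to `φ`
and `θ'` to `φ'`. If `(θ, θ')` and `(θ, θ'')` are factor pairs, a single `θ`-class is a
transversal of both `θ'` and `θ''`, whence `X/θ' ≃ X/θ''`; using the identity on `X/θ`, the
resulting permutation fixes every `θ`-class. -/

theorem permSetoid_eq_of_mk_apply {X : Type*} {θ φ : Setoid X} (σ : Equiv.Perm X)
    (f : Quotient θ ≃ Quotient φ) (hσ : ∀ x, Quotient.mk φ (σ x) = f (Quotient.mk θ x)) :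
    permSetoid σ θ = φ := by
  ext a b
  calc θ (σ.symm a) (σ.symm b) ↔ Quotient.mk θ (σ.symm a) = Quotient.mk θ (σ.symm b) :=
        Quotient.eq.symm
    _ ↔ f (Quotient.mk θ (σ.symm a)) = f (Quotient.mk θ (σ.symm b)) := f.apply_eq_iff_eq.symm
    _ ↔ Quotient.mk φ a = Quotient.mk φ b := by
        rw [← hσ, ← hσ, σ.apply_symm_apply, σ.apply_symm_apply]
    _ ↔ φ a b := Quotient.eq

namespace IsFactorPair

variable {X : Type*} {θ θ' θ'' φ φ' : Setoid X}

noncomputable def equivProd (h : IsFactorPair θ θ') : X ≃ Quotient θ × Quotient θ' :=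
  Equiv.ofBijective (fun x => (Quotient.mk θ x, Quotient.mk θ' x)) <| by
    refine ⟨fun a b hab => (h.1 a b).1
      ⟨Quotient.exact (congrArg Prod.fst hab), Quotient.exact (congrArg Prod.snd hab)⟩, ?_⟩
    rintro ⟨a, b⟩
    induction a, b using Quotient.inductionOn₂ with
    | h x y =>
      obtain ⟨z, hxz, hzy⟩ := h.2 x y
      exact ⟨z, Prod.ext (Quotient.sound (θ.symm' hxz)) (Quotient.sound hzy)⟩

noncomputable def classEquivQuotient (h : IsFactorPair θ θ') (x₀ : X) :
    {z // θ x₀ z} ≃ Quotient θ' :=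
  Equiv.ofBijective (fun z => Quotient.mk θ' z.1) <| by
    refine ⟨fun a b hab => Subtype.ext ((h.1 a b).1
      ⟨θ.trans' (θ.symm' a.2) b.2, Quotient.exact hab⟩), fun b => ?_⟩
    induction b using Quotient.inductionOn with
    | h y =>
      obtain ⟨z, hxz, hzy⟩ := h.2 x₀ y
      exact ⟨⟨z, hxz⟩, Quotient.sound hzy⟩

theorem nonempty_quotient_equiv (h : IsFactorPair θ θ') (k : IsFactorPair θ θ'') :
    Nonempty (Quotient θ' ≃ Quotient θ'') := by
  rcases isEmpty_or_nonempty X with _ | ⟨⟨x₀⟩⟩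
  · exact ⟨Equiv.equivOfIsEmpty _ _⟩
  · exact ⟨(h.classEquivQuotient x₀).symm.trans (k.classEquivQuotient x₀)⟩

noncomputable def transportPerm (h : IsFactorPair θ θ') (k : IsFactorPair φ φ')
    (f : Quotient θ ≃ Quotient φ) (g : Quotient θ' ≃ Quotient φ') : Equiv.Perm X :=
  (h.equivProd.trans (f.prodCongr g)).trans k.equivProd.symm

variable (h : IsFactorPair θ θ') (k : IsFactorPair φ φ')
  (f : Quotient θ ≃ Quotient φ) (g : Quotient θ' ≃ Quotient φ')

theorem mk_transportPerm_fst (x : X) :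
    Quotient.mk φ (h.transportPerm k f g x) = f (Quotient.mk θ x) :=
  congrArg Prod.fst (k.equivProd.apply_symm_apply _)

theorem mk_transportPerm_snd (x : X) :
    Quotient.mk φ' (h.transportPerm k f g x) = g (Quotient.mk θ' x) :=
  congrArg Prod.snd (k.equivProd.apply_symm_apply _)

end IsFactorPair

/-- Transitivity: if `(θ,θ')` and `(φ,φ')` are factor pairs of `X` with `X/θ ≃ X/φ` and
`X/θ' ≃ X/φ'`, then some permutation `σ` of `X` satisfies `σ(θ) = φ` and `σ(θ') = φ'`.
Moreover any two factor pairs `(θ,θ')`, `(θ,θ'')` with the same first component satisfy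
these cardinality conditions, and then `σ` may be chosen with `(x,σ(x)) ∈ θ` for all
`x`. -/
theorem factPair_transitivity (X : Type*) :
    (∀ (θ θ' φ φ' : Setoid X), IsFactorPair θ θ' → IsFactorPair φ φ' →
      Nonempty (Quotient θ ≃ Quotient φ) → Nonempty (Quotient θ' ≃ Quotient φ') →
      ∃ σ : Equiv.Perm X, permSetoid σ θ = φ ∧ permSetoid σ θ' = φ') ∧
    (∀ (θ θ' θ'' : Setoid X), IsFactorPair θ θ' → IsFactorPair θ θ'' →
      (Nonempty (Quotient θ ≃ Quotient θ) ∧ Nonempty (Quotient θ' ≃ Quotient θ'')) ∧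
      ∃ σ : Equiv.Perm X, permSetoid σ θ = θ ∧ permSetoid σ θ' = θ'' ∧
        ∀ x : X, θ x (σ x)) := by
  refine ⟨fun θ θ' φ φ' h k ⟨f⟩ ⟨g⟩ => ⟨h.transportPerm k f g,
      permSetoid_eq_of_mk_apply _ f (h.mk_transportPerm_fst k f g),
      permSetoid_eq_of_mk_apply _ g (h.mk_transportPerm_snd k f g)⟩, fun θ θ' θ'' h k => ?_⟩
  obtain ⟨g⟩ := h.nonempty_quotient_equiv k
  refine ⟨⟨⟨Equiv.refl _⟩, ⟨g⟩⟩, h.transportPerm k (Equiv.refl _) g,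
    permSetoid_eq_of_mk_apply _ _ (h.mk_transportPerm_fst k _ g),
    permSetoid_eq_of_mk_apply _ g (h.mk_transportPerm_snd k _ g), fun x => ?_⟩
  exact Quotient.exact (h.mk_transportPerm_fst k (Equiv.refl _) g x).symm
end

section
/- Let X be an infinite set. If (θ,θ') and (θ,θ'') are 2-atoms of Fact(X) with the same first coordinate, then (θ,θ') ≈₂ (θ,θ''), where ≈₂ is the transitive closure of the relation ∼₂ on 2-atoms defined by: (θ,θ') ∼₂ (θ,θ'') iff they have the same first coordinate and there is a factor pair (γ,γ') such that X/γ has exactly 8 elements and both (θ,θ') and (θ,θ'') lie in the interval [0,(γ,γ')] of Fact(X). -/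
/-- A `2`-atom of `Fact X`. -/
def Is2Atom {X : Type*} (a : FactPair X) : Prop :=
  IsFactAtom a ∧ IsNRel 2 a.1.2

/-- The relation `∼₂` on `2`-atoms: same first coordinate, and both lie in an interval
`[0,(γ,γ')]` where `X/γ` has exactly `8` elements. -/
def Sim2 {X : Type*} (a b : FactPair X) : Prop :=
  Is2Atom a ∧ Is2Atom b ∧ a.1.1 = b.1.1 ∧
    ∃ g : FactPair X, Nat.card (Quotient g.1.1) = 8 ∧ FactLE a g ∧ FactLE b g


/-!
The first coordinate `θ` of a `2`-atom has two classes, so a factor pair `(θ, θ')` amounts to a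
decomposition `X ≃ Bool × Y` in which `θ` and `θ'` are the kernels of the two projections, and
any two such decompositions with the same first projection differ, up to relabelling `Y`, by a
permutation `β` of the fibre over `true`. If `β` acts, in some coordinates `Y ≃ L × W` with
`|L| = 4`, through a permutation of `L` alone, then both factor pairs lie below the one of
`X ≃ (Bool × L) × W`, which has `8` classes: this is one `∼₂` step. For infinite `Y` these
permutations generate `Sym(Y)`: every permutation is a product of two involutions, and comparing
the cardinalities of the moved and fixed parts, every involution is a product of two involutions
that move and fix equally many points, which are of this form with `L = Bool ⊕ Bool`.
-/

open Equiv Equiv.Perm Function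

universe u

theorem nonempty_sum_equiv_of_embedding {A B : Type u} [Infinite A] (i : B ↪ A) :
    Nonempty (A ⊕ B ≃ A) := by
  rw [← Cardinal.eq, Cardinal.mk_sum, Cardinal.lift_id, Cardinal.lift_id]
  exact Cardinal.add_eq_left (Cardinal.infinite_iff.mp ‹_›)
    (Cardinal.mk_le_of_injective i.injective)

namespace FactPair

variable {X A B C : Type*}

def ofEquivProd (e : X ≃ A × B) : FactPair X :=
  ⟨(Setoid.ker (Prod.fst ∘ e), Setoid.ker (Prod.snd ∘ e)),
    fun x y => ⟨fun h => e.injective (Prod.ext h.1 h.2), fun h => h ▸ ⟨rfl, rfl⟩⟩,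
    fun x y => ⟨e.symm ((e x).1, (e y).2), by simp [Setoid.ker_def], by simp [Setoid.ker_def]⟩⟩

@[simp]
theorem ofEquivProd_fst_apply {e : X ≃ A × B} {x y : X} :
    (ofEquivProd e).1.1 x y ↔ (e x).1 = (e y).1 := Iff.rfl

@[simp]
theorem ofEquivProd_snd_apply {e : X ≃ A × B} {x y : X} :
    (ofEquivProd e).1.2 x y ↔ (e x).2 = (e y).2 := Iff.rfl

theorem ofEquivProd_trans_prodCongr {A' B' : Type*} (e : X ≃ A × B) (α : A ≃ A') (β : B ≃ B') :
    ofEquivProd (e.trans (α.prodCongr β)) = ofEquivProd e := by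
  refine Subtype.ext (Prod.ext ?_ ?_) <;> ext x y <;> simp

theorem ofEquivProd_prodAssoc_le (E : X ≃ (A × B) × C) :
    FactLE (ofEquivProd (E.trans (prodAssoc A B C))) (ofEquivProd E) := by
  refine ⟨fun x y h => by simp_all, fun x y h => by simp_all, ?_⟩
  ext x z
  simp only [Relation.Comp, ofEquivProd_fst_apply, ofEquivProd_snd_apply, trans_apply,
      prodAssoc_apply, Prod.mk.injEq]
  constructor
  · rintro ⟨y, hxy, hyz⟩
    exact ⟨E.symm ((E z).1, (E x).2), by simp [hxy, hyz.1]⟩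
  · rintro ⟨y, hxy, hyz⟩
    exact ⟨E.symm ((E x).1, (E z).2), by simp [hxy.1, hyz]⟩

theorem card_quotient_ofEquivProd_fst [Nonempty B] (e : X ≃ A × B) :
    Nat.card (Quotient (ofEquivProd e).1.1) = Nat.card A :=
  Nat.card_congr (Setoid.quotientKerEquivOfSurjective _ (Prod.fst_surjective.comp e.surjective))

theorem card_ofEquivProd_snd_class (e : X ≃ A × B) (x : X) :
    Nat.card {y // (ofEquivProd e).1.2 x y} = Nat.card A :=
  Nat.card_congr
    { toFun := fun y => (e y).1
      invFun := fun a => ⟨e.symm (a, (e x).2), by simp⟩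
      left_inv := fun ⟨y, hy⟩ => by
        rw [ofEquivProd_snd_apply] at hy
        simp [hy]
      right_inv := fun a => by simp }

theorem factLE_zero (p : FactPair X) : FactLE (FactZero X) p := by
  refine ⟨le_top, bot_le, ?_⟩
  ext x y
  simp only [Relation.Comp]
  exact ⟨fun ⟨z, hxz, hzy⟩ => ⟨x, rfl, hzy ▸ hxz⟩, fun ⟨z, hxz, hzy⟩ => ⟨y, hxz ▸ hzy, rfl⟩⟩

theorem eq_zero_of_fst_eq_top {p : FactPair X} (h : p.1.1 = ⊤) : p = FactZero X := by
  refine Subtype.ext (Prod.ext h (Setoid.ext fun x y => ?_))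
  refine ⟨fun hxy => (p.2.1 x y).1 ⟨by rw [h]; trivial, hxy⟩, ?_⟩
  rintro rfl
  exact p.1.2.refl' x

theorem eq_of_fst_eq_of_snd_le {p q : FactPair X} (h₁ : q.1.1 = p.1.1) (h₂ : q.1.2 ≤ p.1.2) :
    q = p := by
  refine Subtype.ext (Prod.ext h₁ (le_antisymm h₂ fun x y hxy => ?_))
  obtain ⟨z, hxz, hzy⟩ := q.2.2 x y
  have hzx : z = x :=
    (p.2.1 z x).1 ⟨h₁ ▸ q.1.1.symm' hxz, p.1.2.trans' (h₂ hzy) (p.1.2.symm' hxy)⟩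
  exact hzx ▸ hzy

theorem isFactAtom_of_isCoatom {p : FactPair X} (h : IsCoatom p.1.1) : IsFactAtom p := by
  refine ⟨⟨factLE_zero p, fun h0 => h.1 (h0 ▸ rfl)⟩, fun q ⟨_, hq0⟩ ⟨⟨hle, hle', _⟩, hqp⟩ => ?_⟩
  rcases h.le_iff.mp hle with hq | hq
  · exact hq0 (eq_zero_of_fst_eq_top hq).symm
  · exact hqp (eq_of_fst_eq_of_snd_le hq hle')

theorem _root_.Setoid.isCoatom_ker_of_surjective {f : X → Bool} (hf : Surjective f) :
    IsCoatom (Setoid.ker f) := by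
  obtain ⟨x, hx⟩ := hf true
  obtain ⟨y, hy⟩ := hf false
  refine ⟨fun htop => ?_, fun φ hφ => Setoid.eq_top_iff.mpr ?_⟩
  · have : f x = f y := Setoid.ker_def.mp (Setoid.eq_top_iff.mp htop x y)
    simp [hx, hy] at this
  · obtain ⟨u, v, huv, hne⟩ : ∃ u v, φ u v ∧ f u ≠ f v := by
      by_contra! hker
      exact hφ.2 fun u v h => Setoid.ker_def.mpr (hker u v h)
    have hto_u : ∀ w, φ w u := fun w => by
      by_cases hw : f w = f u
      · exact hφ.1 (Setoid.ker_def.mpr hw)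
      · have hwv : f w = f v := by revert hw hne; cases f w <;> cases f u <;> cases f v <;> simp
        exact φ.trans' (hφ.1 (Setoid.ker_def.mpr hwv)) (φ.symm' huv)
    exact fun w w' => φ.trans' (hto_u w) (φ.symm' (hto_u w'))

theorem is2Atom_ofEquivProd {Y : Type*} [Nonempty Y] (e : X ≃ Bool × Y) :
    Is2Atom (ofEquivProd e) :=
  ⟨isFactAtom_of_isCoatom
      (Setoid.isCoatom_ker_of_surjective (Prod.fst_surjective.comp e.surjective)),
    fun x => by rw [card_ofEquivProd_snd_class, Nat.card_eq_fintype_card, Fintype.card_bool]⟩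

theorem exists_eq_ofEquivProd (p : FactPair X) (s : X → A) (hs : Surjective s)
    (hker : Setoid.ker s = p.1.1) :
    ∃ e : X ≃ A × Quotient p.1.2, (∀ x, (e x).1 = s x) ∧ ofEquivProd e = p := by
  have hs' : ∀ x y, s x = s y ↔ p.1.1 x y := fun x y => by rw [← hker, Setoid.ker_def]
  have hbij : Bijective fun x => (s x, Quotient.mk p.1.2 x) := by
    refine ⟨fun x y hxy => ?_, fun ⟨a, q⟩ => ?_⟩
    · simp only [Prod.mk.injEq, Quotient.eq] at hxy
      exact (p.2.1 x y).1 ⟨(hs' x y).1 hxy.1, hxy.2⟩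
    · induction q using Quotient.ind with | _ y => ?_
      obtain ⟨x, rfl⟩ := hs a
      obtain ⟨z, hxz, hzy⟩ := p.2.2 x y
      exact ⟨z, Prod.ext ((hs' z x).2 (p.1.1.symm' hxz)) (Quotient.sound hzy)⟩
  refine ⟨Equiv.ofBijective _ hbij, fun x => rfl, Subtype.ext (Prod.ext ?_ ?_)⟩ <;>
    ext x y <;> simp [hs', Quotient.eq]

theorem exists_surjective_bool_ker_eq [Nonempty X] (p : FactPair X) (hp : IsNRel 2 p.1.2) :
    ∃ s : X → Bool, Surjective s ∧ Setoid.ker s = p.1.1 := by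
  let x := Classical.arbitrary X
  obtain ⟨e, -, hep⟩ :=
    exists_eq_ofEquivProd p (Quotient.mk p.1.1) Quotient.mk_surjective (Setoid.ker_mk_eq _)
  have hcard : Nat.card (Quotient p.1.1) = Nat.card Bool := by
    rw [← card_ofEquivProd_snd_class e x, hep, hp x, Nat.card_eq_fintype_card, Fintype.card_bool]
  have : Finite (Quotient p.1.1) := Nat.finite_of_card_ne_zero (by simp [hcard])
  obtain ⟨c⟩ := Finite.card_eq.mp hcard
  refine ⟨c ∘ Quotient.mk _, c.surjective.comp Quotient.mk_surjective, ?_⟩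
  ext x y
  simp [Setoid.ker_def, Quotient.eq]


theorem exists_ofEquivProd_eq_prodExtendRight {Y Y' : Type*} (e : X ≃ Bool × Y)
    (e' : X ≃ Bool × Y') (h : ∀ x, (e' x).1 = (e x).1) :
    ∃ β : Perm Y, ofEquivProd e' = ofEquivProd (e.trans (prodExtendRight true β)) := by
  have hφ (q : Bool) : Bijective fun y => (e' (e.symm (q, y))).2 := by
    refine ⟨fun y₁ y₂ h₁₂ => ?_, fun y' => ⟨(e (e'.symm (q, y'))).2, ?_⟩⟩
    · have h₁ := h (e.symm (q, y₁))
      have h₂ := h (e.symm (q, y₂))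
      simp only [apply_symm_apply] at h₁ h₂
      simpa using e'.injective (Prod.ext (h₁.trans h₂.symm) h₁₂)
    · have hq : (e (e'.symm (q, y'))).1 = q := by simpa using (h (e'.symm (q, y'))).symm
      have hx : (q, (e (e'.symm (q, y'))).2) = e (e'.symm (q, y')) := Prod.ext hq.symm rfl
      simp only [hx, symm_apply_apply, apply_symm_apply]
  let ψ (q : Bool) : Y ≃ Y' := Equiv.ofBijective _ (hφ q)
  refine ⟨(ψ true).trans (ψ false).symm, ?_⟩
  rw [← ofEquivProd_trans_prodCongr _ (Equiv.refl Bool) (ψ false)]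
  congr 1
  ext x : 1
  refine Prod.ext (by simp [h, fst_prodExtendRight]) ?_
  obtain ⟨⟨q, y⟩, rfl⟩ := e.symm.surjective x
  cases q <;> simp [prodExtendRight_apply_eq, prodExtendRight_apply_ne] <;> rfl

end FactPair

namespace Equiv.Perm

theorem prodExtendRight_one {α β : Type*} [DecidableEq α] (a : α) :
    prodExtendRight a (1 : Perm β) = 1 := by
  ext ⟨a', b⟩ : 1
  by_cases h : a' = a
  · subst h; simp [prodExtendRight_apply_eq]
  · simp [prodExtendRight_apply_ne _ h]

theorem prodExtendRight_mul {α β : Type*} [DecidableEq α] (a : α) (σ τ : Perm β) :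
    prodExtendRight a (σ * τ) = prodExtendRight a σ * prodExtendRight a τ := by
  ext ⟨a', b⟩ : 1
  by_cases h : a' = a
  · subst h; simp [prodExtendRight_apply_eq]
  · simp [prodExtendRight_apply_ne _ h]

variable {Y Z : Type u}

def IsPatterned (σ : Perm Y) : Prop :=
  ∃ (L : Type) (W : Type u) (m : Y ≃ L × W) (π : Perm L),
    Nat.card L = 4 ∧ σ = m.symm.permCongr (π.prodCongr (Equiv.refl W))

theorem IsPatterned.permCongr {σ : Perm Y} (hσ : IsPatterned σ) (f : Y ≃ Z) :
    IsPatterned (f.permCongr σ) := by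
  obtain ⟨L, W, m, π, hL, rfl⟩ := hσ
  exact ⟨L, W, f.symm.trans m, π, hL, by ext; simp⟩

theorem isPatterned_one [Infinite Y] : IsPatterned (1 : Perm Y) := by
  obtain ⟨d⟩ := nonempty_sum_equiv_of_embedding (Embedding.refl Y)
  let d₂ : Y ≃ Bool × Y := d.symm.trans (boolProdEquivSum Y).symm
  exact ⟨Bool × Bool, Y, d₂.trans ((Equiv.refl Bool).prodCongr d₂) |>.trans (prodAssoc _ _ _).symm,
    1, by simp, by ext; simp⟩

def flipFst (A : Type*) : Perm (Bool × A) := boolNot.prodCongr (Equiv.refl A)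

@[simp]
theorem flipFst_apply {A : Type*} (p : Bool × A) : flipFst A p = (!p.1, p.2) := rfl

theorem isPatterned_sumCongr_flipFst {A R : Type u} (f : R ≃ Bool × A) :
    IsPatterned (sumCongr (flipFst A) (1 : Perm R)) :=
  ⟨Bool ⊕ Bool, A, ((Equiv.refl _).sumCongr f).trans (sumProdDistrib _ _ _).symm,
    sumCongr boolNot 1, by simp, by ext (⟨b, a⟩ | r) <;> simp⟩

theorem isPatterned_sumCongr_sumCongr_flipFst {A B C : Type u} (f : (Bool × A) ⊕ C ≃ Bool × B) :
    IsPatterned (sumCongr (1 : Perm (Bool × A)) (sumCongr (flipFst B) (1 : Perm C))) := by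
  convert (isPatterned_sumCongr_flipFst f).permCongr
    ((sumAssoc _ _ _).symm.trans (((sumComm _ _).sumCongr (Equiv.refl C)).trans (sumAssoc _ _ _)))
    using 1
  ext (x | x | x) <;> simp

theorem isPatterned_sumCongr_flipFst_sumCongr_flipFst {A B C : Type u}
    (f : C ≃ Bool × (A ⊕ B)) :
    IsPatterned (sumCongr (flipFst A) (sumCongr (flipFst B) (1 : Perm C))) := by
  convert (isPatterned_sumCongr_flipFst f).permCongr
    (((prodSumDistrib Bool A B).sumCongr (Equiv.refl C)).trans (sumAssoc _ _ _)) using 1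
  ext (x | x | x) <;> simp

theorem IsPatterned.mem_closure {σ : Perm Y} (hσ : IsPatterned σ) :
    σ ∈ Submonoid.closure {σ : Perm Y | IsPatterned σ} :=
  Submonoid.subset_closure hσ

theorem permCongr_mem_closure_isPatterned (f : Y ≃ Z) {σ : Perm Y}
    (hσ : σ ∈ Submonoid.closure {σ : Perm Y | IsPatterned σ}) :
    f.permCongr σ ∈ Submonoid.closure {σ : Perm Z | IsPatterned σ} := by
  induction hσ using Submonoid.closure_induction with
  | mem σ hσ => exact (hσ.permCongr f).mem_closure
  | one => exact (congrArg (· ∈ _) (f.permCongrHom.map_one)).mpr (one_mem _)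
  | mul σ τ _ _ hσ hτ => simpa [permCongr_mul] using mul_mem hσ hτ

theorem mem_closure_isPatterned_of_permCongr (f : Y ≃ Z) {σ : Perm Y}
    (hσ : f.permCongr σ ∈ Submonoid.closure {σ : Perm Z | IsPatterned σ}) :
    σ ∈ Submonoid.closure {σ : Perm Y | IsPatterned σ} := by
  simpa only [← permCongr_symm, symm_apply_apply] using permCongr_mem_closure_isPatterned f.symm hσ

theorem sumCongr_flipFst_mem_closure_of_infinite_left {M F : Type u} [Infinite M]
    (i : F ↪ Bool × M) :
    sumCongr (flipFst M) (1 : Perm F) ∈ Submonoid.closure {σ | IsPatterned σ} := by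
  obtain ⟨d⟩ := nonempty_sum_equiv_of_embedding (Embedding.refl M)
  obtain ⟨r⟩ := nonempty_sum_equiv_of_embedding i
  -- Split `M` into two halves; the flip of each half fixes as many points as it moves.
  let g : (Bool × M) ⊕ F ≃ (Bool × M) ⊕ ((Bool × M) ⊕ F) :=
    (((Equiv.refl Bool).prodCongr d.symm).trans (prodSumDistrib Bool M M)).sumCongr
      (Equiv.refl F) |>.trans (sumAssoc _ _ _)
  refine mem_closure_isPatterned_of_permCongr g ?_
  have hg : g.permCongr (sumCongr (flipFst M) 1) =
      sumCongr (flipFst M) 1 * sumCongr 1 (sumCongr (flipFst M) 1) := by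
    ext (x | x | x) <;> simp [g]
  rw [hg]
  exact mul_mem (isPatterned_sumCongr_flipFst r).mem_closure
    (isPatterned_sumCongr_sumCongr_flipFst r).mem_closure

theorem sumCongr_flipFst_mem_closure_of_infinite_right {M F : Type u} [Infinite F]
    (i : Bool × M ↪ F) :
    sumCongr (flipFst M) (1 : Perm F) ∈ Submonoid.closure {σ | IsPatterned σ} := by
  obtain ⟨d⟩ := nonempty_sum_equiv_of_embedding (Embedding.refl F)
  obtain ⟨r₁⟩ := nonempty_sum_equiv_of_embedding ((Embedding.sectR true M).trans i)
  obtain ⟨r₂⟩ := nonempty_sum_equiv_of_embedding (i.trans (Embedding.sectR true F))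
  let c : Bool × F ≃ F := (boolProdEquivSum F).trans d
  -- Flip a copy of `Bool × F` inside `F` twice: once together with `Bool × M`, once alone.
  let g : (Bool × M) ⊕ F ≃ (Bool × M) ⊕ ((Bool × F) ⊕ (Bool × F)) :=
    (Equiv.refl _).sumCongr (d.symm.trans (c.symm.sumCongr c.symm))
  refine mem_closure_isPatterned_of_permCongr g ?_
  have hg : g.permCongr (sumCongr (flipFst M) 1) =
      sumCongr (flipFst M) (sumCongr (flipFst F) 1) * sumCongr 1 (sumCongr (flipFst F) 1) := by
    ext (x | x | x) <;> simp [g]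
  rw [hg]
  exact mul_mem (isPatterned_sumCongr_flipFst_sumCongr_flipFst
      ((Equiv.refl Bool).prodCongr ((sumComm M F).trans r₁).symm)).mem_closure
    (isPatterned_sumCongr_sumCongr_flipFst ((sumComm _ _).trans r₂)).mem_closure

theorem exists_equiv_bool_prod_of_involutive {g : Z → Z} (hg : Involutive g)
    (hfix : ∀ z, g z ≠ z) :
    ∃ (M : Type u) (e : Z ≃ Bool × M), ∀ z, e (g z) = flipFst M (e z) := by
  classical
  let S := Setoid.ker fun z => s(z, g z)
  have hS (z z' : Z) : S z z' ↔ z' = z ∨ z' = g z := by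
    rw [Setoid.ker_def, Sym2.eq_iff]
    constructor
    · rintro (⟨rfl, -⟩ | ⟨-, rfl⟩)
      exacts [Or.inl rfl, Or.inr rfl]
    · rintro (rfl | rfl)
      exacts [Or.inl ⟨rfl, rfl⟩, Or.inr ⟨(hg z).symm, rfl⟩]
  have hmk_g (z : Z) : Quotient.mk S (g z) = Quotient.mk S z :=
    Quotient.sound ((hS _ _).2 (Or.inr (hg z).symm))
  let side (z : Z) : Bool := decide ((Quotient.mk S z).out = z)
  have hside_g (z : Z) : side (g z) = !side z := by
    have hrep : (Quotient.mk S z).out = z ∨ (Quotient.mk S z).out = g z :=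
      (hS _ _).1 (S.symm' (Quotient.mk_out z))
    simp only [side, hmk_g]
    rcases hrep with h | h <;> simp [h, hfix z, (hfix z).symm]
  let e (z : Z) : Bool × Quotient S := (side z, Quotient.mk S z)
  have he (z : Z) : e (g z) = flipFst _ (e z) := Prod.ext (hside_g z) (hmk_g z)
  have hbij : Bijective e := by
    refine ⟨fun z z' hzz' => ?_, fun ⟨b, q⟩ => ?_⟩
    · rcases (hS z z').1 (Quotient.exact (congrArg Prod.snd hzz')) with rfl | rfl
      · rfl
      · have := congrArg Prod.fst ((he z).symm.trans hzz'.symm)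
        simp at this
    · have hq : e q.out = (true, q) := by simp [e, side]
      cases b
      · exact ⟨g q.out, by rw [he, hq]; rfl⟩
      · exact ⟨q.out, hq⟩
  exact ⟨Quotient S, Equiv.ofBijective e hbij, he⟩

theorem exists_permCongr_eq_sumCongr_flipFst {u : Perm Y} (hu : Involutive u) :
    ∃ (M F : Type u) (f : Y ≃ (Bool × M) ⊕ F), f.permCongr u = sumCongr (flipFst M) 1 := by
  classical
  let g (y : {y // u y ≠ y}) : {y // u y ≠ y} := ⟨u y, by rw [hu]; exact y.2.symm⟩
  obtain ⟨M, e, he⟩ := exists_equiv_bool_prod_of_involutive (g := g)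
    (fun y => Subtype.ext (hu y)) (fun y h => y.2 (congrArg Subtype.val h))
  let f := (sumCompl fun y => u y ≠ y).symm.trans (e.sumCongr (Equiv.refl _))
  refine ⟨M, _, f, Equiv.ext fun x => ?_⟩
  obtain ⟨y, rfl⟩ := f.surjective x
  rw [permCongr_apply, symm_apply_apply]
  by_cases hy : u y ≠ y
  · have hy' : u (u y) ≠ u y := by rw [hu]; exact hy.symm
    simp only [f, trans_apply, sumCompl_symm_apply_of_pos (p := fun y => u y ≠ y) hy,
      sumCompl_symm_apply_of_pos (p := fun y => u y ≠ y) hy']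
    exact congrArg Sum.inl (he ⟨y, hy⟩)
  · rw [not_not] at hy
    simp [f, hy]

theorem involutive_mem_closure_isPatterned [Infinite Y] {u : Perm Y} (hu : Involutive u) :
    u ∈ Submonoid.closure {σ | IsPatterned σ} := by
  obtain ⟨M, F, f, hf⟩ := exists_permCongr_eq_sumCongr_flipFst hu
  refine mem_closure_isPatterned_of_permCongr f (hf ▸ ?_)
  have : Infinite ((Bool × M) ⊕ F) := Infinite.of_injective f f.injective
  rcases Embedding.total (Bool × M) F with ⟨⟨i⟩⟩ | ⟨⟨i⟩⟩
  · have : Infinite F := by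
      refine (finite_or_infinite F).resolve_left fun _ => ?_
      have := Finite.of_injective i i.injective
      exact not_finite ((Bool × M) ⊕ F)
    exact sumCongr_flipFst_mem_closure_of_infinite_right i
  · have : Infinite M := by
      refine (finite_or_infinite M).resolve_left fun _ => ?_
      have := Finite.of_injective i i.injective
      exact not_finite ((Bool × M) ⊕ F)
    exact sumCongr_flipFst_mem_closure_of_infinite_left i

theorem exists_involutive_mul_eq (β : Perm Y) :
    ∃ i v : Perm Y, Involutive i ∧ Involutive v ∧ β = i * v := by
  let r (y : Y) : Y := (Quotient.mk (SameCycle.setoid β) y).out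
  have hr (y : Y) : β.SameCycle (r y) y := Quotient.mk_out (s := SameCycle.setoid β) y
  have hr_eq {y z : Y} (h : β.SameCycle y z) : r y = r z :=
    congrArg Quotient.out (Quotient.sound h)
  choose n hn using hr
  have hzpow (a b : ℤ) (y : Y) : (β ^ a) ((β ^ b) y) = (β ^ (a + b)) y := by
    rw [zpow_add, Perm.mul_apply]
  -- On the cycle of `y`, indexed by `k ↦ (β ^ k) (r y)`, `reflect c` is the reflection
  -- `k ↦ c - k`; two reflections compose to a translation.
  let reflect (c : ℤ) (y : Y) : Y := (β ^ (c - n y)) (r y)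
  have hr_reflect (c : ℤ) (y : Y) : r (reflect c y) = r y :=
    (hr_eq (SameCycle.symm ⟨c - n y, rfl⟩)).trans (hr_eq ⟨n y, hn y⟩)
  have hreflect (c d : ℤ) (y : Y) : reflect c (reflect d y) = (β ^ (c - d)) y := by
    have h := hn (reflect d y)
    rw [hr_reflect] at h
    calc (β ^ (c - n (reflect d y))) (r (reflect d y))
        = (β ^ (c - n (reflect d y) - d + n y)) ((β ^ (d - n y)) (r y)) := by
          rw [hr_reflect, hzpow]; congr 2; ring
      _ = (β ^ (c - n (reflect d y) - d + n y)) ((β ^ n (reflect d y)) (r y)) := by rw [h]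
      _ = (β ^ (c - d)) ((β ^ n y) (r y)) := by rw [hzpow, hzpow]; congr 2; ring
      _ = (β ^ (c - d)) y := by rw [hn]
  have hinv (c : ℤ) : Involutive (reflect c) := fun y => by
    rw [hreflect, sub_self, zpow_zero, one_apply]
  exact ⟨(hinv 1).toPerm, (hinv 0).toPerm, hinv 1, hinv 0,
    Equiv.ext fun y => by simp [hreflect]⟩

theorem closure_isPatterned_eq_top [Infinite Y] :
    Submonoid.closure {σ : Perm Y | IsPatterned σ} = ⊤ := by
  refine eq_top_iff.mpr fun β _ => ?_
  obtain ⟨i, v, hi, hv, rfl⟩ := exists_involutive_mul_eq β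
  exact mul_mem (involutive_mem_closure_isPatterned hi) (involutive_mem_closure_isPatterned hv)

end Equiv.Perm

namespace FactPair

variable {X : Type*}

theorem sim2_ofEquivProd_prodExtendRight {Y : Type u} [Nonempty Y] (e : X ≃ Bool × Y)
    {σ : Perm Y} (hσ : IsPatterned σ) :
    Sim2 (ofEquivProd e) (ofEquivProd (e.trans (prodExtendRight true σ))) := by
  obtain ⟨L, W, m, π, hL, rfl⟩ := hσ
  have : Nonempty W := ⟨(m (Classical.arbitrary Y)).2⟩
  let E : X ≃ (Bool × L) × W :=
    (e.trans ((Equiv.refl Bool).prodCongr m)).trans (prodAssoc _ _ _).symm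
  let ρ : Perm ((Bool × L) × W) := (prodExtendRight true π).prodCongr (Equiv.refl W)
  have ha : ofEquivProd e = ofEquivProd (E.trans (prodAssoc _ _ _)) := by
    rw [← ofEquivProd_trans_prodCongr e (Equiv.refl Bool) m]
    congr 1
  have hb : ofEquivProd (e.trans (prodExtendRight true (m.symm.permCongr (π.prodCongr 1)))) =
      ofEquivProd ((E.trans ρ).trans (prodAssoc _ _ _)) := by
    rw [← ofEquivProd_trans_prodCongr _ (Equiv.refl Bool) m]
    congr 1
    ext x <;> rcases h : e x with ⟨_ | _, y⟩ <;>
      simp [E, ρ, h, prodExtendRight_apply_eq, prodExtendRight_apply_ne]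
  refine ⟨is2Atom_ofEquivProd _, is2Atom_ofEquivProd _, ?_, ofEquivProd E, ?_,
    ha ▸ ofEquivProd_prodAssoc_le E,
    hb ▸ ofEquivProd_trans_prodCongr E _ (Equiv.refl W) ▸ ofEquivProd_prodAssoc_le (E.trans ρ)⟩
  · ext x y
    simp [fst_prodExtendRight]
  · rw [card_quotient_ofEquivProd_fst, Nat.card_prod, hL, Nat.card_eq_fintype_card,
      Fintype.card_bool]

theorem transGen_sim2_ofEquivProd_prodExtendRight [Infinite X] {Y : Type u} (e : X ≃ Bool × Y)
    (β : Perm Y) :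
    Relation.TransGen Sim2 (ofEquivProd e) (ofEquivProd (e.trans (prodExtendRight true β))) := by
  have : Infinite Y := (finite_or_infinite Y).resolve_left fun _ =>
    have := Finite.of_equiv _ e.symm
    not_finite X
  have hβ : β ∈ Submonoid.closure {σ : Perm Y | IsPatterned σ} :=
    closure_isPatterned_eq_top (Y := Y) ▸ Submonoid.mem_top β
  induction hβ using Submonoid.closure_induction_left with
  | one =>
    have h := sim2_ofEquivProd_prodExtendRight e (isPatterned_one (Y := Y))
    rw [prodExtendRight_one] at h ⊢
    exact .single h
  | mul_left σ hσ τ _ ih =>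
    rw [prodExtendRight_mul, Perm.mul_def, ← trans_assoc]
    exact ih.tail (sim2_ofEquivProd_prodExtendRight _ hσ)

end FactPair

open FactPair in
theorem two_atoms_approx2_general (X : Type*) [Infinite X] (a b : FactPair X)
    (ha : Is2Atom a) (hfst : a.1.1 = b.1.1) :
    Relation.TransGen Sim2 a b := by
  obtain ⟨s, hs, hker⟩ := exists_surjective_bool_ker_eq a ha.2
  obtain ⟨e, he, hae⟩ := exists_eq_ofEquivProd a s hs hker
  obtain ⟨e', he', hbe⟩ := exists_eq_ofEquivProd b s hs (hker.trans hfst)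
  obtain ⟨β, hβ⟩ := exists_ofEquivProd_eq_prodExtendRight e e' fun x => (he' x).trans (he x).symm
  rw [← hae, ← hbe, hβ]
  exact transGen_sim2_ofEquivProd_prodExtendRight e β

/-- Two `2`-atoms of `Fact X` (for `X` infinite) with the same first coordinate are
related by `≈₂`, the transitive closure of `∼₂`. -/
theorem two_atoms_approx2 (X : Type*) [Infinite X] (a b : FactPair X)
    (ha : Is2Atom a) (hb : Is2Atom b) (hfst : a.1.1 = b.1.1) :
    Relation.TransGen Sim2 a b :=
  two_atoms_approx2_general X a b ha hfst
end
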